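/- arXiv:math/9904101 — 13 statements merged into one kernel-verified Lean document; each statement's English description precedes it below -/
import Mathlib

section
/- Let R be a commutative ring, q ∈ R an invertible element, and A an associative unital R-algebra containing elements a, b, c, d satisfying the braided SL_q(2) relations. Then the element q⁻¹·a + q·d is central among the generators: it commutes with each of a, b, c, d. -/
/-- For `a, b, c, d` in an associative unital `R`-algebra `A`
satisfying the braided `SL_q(2)` relations (`q` an invertible element of the
commutative ring `R`), the element `q⁻¹ • a + q • d` commutes with each of
`a`, `b`, `c`, `d`. -/
theorem braided_trace_central {R : Type*} [CommRing R] {A : Type*} [Ring A] [Algebra R A]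
    (q : Rˣ) (a b c d : A)
    (h1 : b * a = ((q : R) ^ 2) • (a * b))
    (h2 : c * a = (((q⁻¹ : Rˣ) : R) ^ 2) • (a * c))
    (h3 : a * d = d * a)
    (h4 : b * c = c * b + ((1 : R) - ((q⁻¹ : Rˣ) : R) ^ 2) • (a * (d - a)))
    (h5 : d * b = b * d + ((1 : R) - ((q⁻¹ : Rˣ) : R) ^ 2) • (a * b))
    (h6 : c * d = d * c + ((1 : R) - ((q⁻¹ : Rˣ) : R) ^ 2) • (c * a))
    (h7 : a * d - ((q : R) ^ 2) • (c * b) = 1) :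
    let t : A := ((q⁻¹ : Rˣ) : R) • a + (q : R) • d
    t * a = a * t ∧ t * b = b * t ∧ t * c = c * t ∧ t * d = d * t := by
  intro t
  have hu : ((q⁻¹ : Rˣ) : R) * (q : R) = 1 := by exact_mod_cast q.inv_mul
  refine ⟨?_, ?_, ?_, ?_⟩ <;>
    simp only [t, add_mul, mul_add, smul_mul_assoc, mul_smul_comm, h1, h2, h3, h5, h6,
      smul_add, smul_smul, smul_sub, sub_smul, one_smul] <;>
    match_scalars <;>
    first
    | ring1
    | linear_combination (-(((q⁻¹ : Rˣ) : R)) - (q : R)) * hu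
    | linear_combination (((q⁻¹ : Rˣ) : R) ^ 3 - ((q⁻¹ : Rˣ) : R)) * hu
end

section
/- Let R be a commutative ring, q ∈ R invertible, and A an associative unital R-algebra containing a, b, c, d satisfying the braided SL_q(2) relations. Define the matrix coproduct Δ(a) = a⊗a + b⊗c, Δ(b) = a⊗b + b⊗d, Δ(c) = c⊗a + d⊗c, Δ(d) = c⊗b + d⊗d, the counit values ε(a) = ε(d) = 1, ε(b) = ε(c) = 0, and the antipode values S(a) = q²·d + (1−q²)·a, S(b) = −q²·b, S(c) = −q²·c, S(d) = a. Then for each x ∈ {a,b,c,d}, writing Δ(x) = Σ u⊗v, one has Σ S(u)·v = ε(x)·1 and Σ u·S(v) = ε(x)·1 in A. -/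
/-- For `a, b, c, d` satisfying the braided `SL_q(2)` relations in an
associative unital `R`-algebra, the matrix coproduct, counit values
`ε(a) = ε(d) = 1`, `ε(b) = ε(c) = 0`, and antipode values
`S(a) = q² d + (1−q²) a`, `S(b) = −q² b`, `S(c) = −q² c`, `S(d) = a`
satisfy the antipode identities `Σ S(u)·v = ε(x)·1 = Σ u·S(v)` on each generator. -/
theorem braided_first_antipode {R : Type*} [CommRing R] {A : Type*} [Ring A] [Algebra R A]
    (q : Rˣ) (a b c d : A)
    (h1 : b * a = ((q : R) ^ 2) • (a * b))
    (h2 : c * a = (((q⁻¹ : Rˣ) : R) ^ 2) • (a * c))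
    (h3 : a * d = d * a)
    (h4 : b * c = c * b + ((1 : R) - ((q⁻¹ : Rˣ) : R) ^ 2) • (a * (d - a)))
    (h5 : d * b = b * d + ((1 : R) - ((q⁻¹ : Rˣ) : R) ^ 2) • (a * b))
    (h6 : c * d = d * c + ((1 : R) - ((q⁻¹ : Rˣ) : R) ^ 2) • (c * a))
    (h7 : a * d - ((q : R) ^ 2) • (c * b) = 1) :
    let Q : R := (q : R)
    let Sa : A := Q ^ 2 • d + ((1 : R) - Q ^ 2) • a
    let Sb : A := (-(Q ^ 2)) • b
    let Sc : A := (-(Q ^ 2)) • c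
    let Sd : A := a
    -- Δ(a) = a⊗a + b⊗c, ε(a) = 1
    (Sa * a + Sb * c = 1) ∧ (a * Sa + b * Sc = 1) ∧
    -- Δ(b) = a⊗b + b⊗d, ε(b) = 0
    (Sa * b + Sb * d = 0) ∧ (a * Sb + b * Sd = 0) ∧
    -- Δ(c) = c⊗a + d⊗c, ε(c) = 0
    (Sc * a + Sd * c = 0) ∧ (c * Sa + d * Sc = 0) ∧
    -- Δ(d) = c⊗b + d⊗d, ε(d) = 1
    (Sc * b + Sd * d = 1) ∧ (c * Sb + d * Sd = 1) := by
  intro Q Sa Sb Sc Sd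
  have hq := q.mul_inv
  refine ⟨?_, ?_, ?_, ?_, ?_, ?_, ?_, ?_⟩ <;>
    simp only [Q, Sa, Sb, Sc, Sd, add_mul, mul_add, smul_mul_assoc, mul_smul_comm]
  · rw [← h3, h4, ← h7]
    simp only [mul_sub, smul_sub]
    match_scalars
    all_goals first
      | ring1
      | linear_combination (-((q:R)*((q⁻¹:Rˣ):R))-1)*hq
      | linear_combination (((q:R)*((q⁻¹:Rˣ):R))+1)*hq
  · rw [h4, ← h7]
    simp only [mul_sub, smul_sub]
    match_scalars
    all_goals first
      | ring1
      | linear_combination (-((q:R)*((q⁻¹:Rˣ):R))-1)*hq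
      | linear_combination (((q:R)*((q⁻¹:Rˣ):R))+1)*hq
  · rw [h5]
    match_scalars
    all_goals first
      | ring1
      | linear_combination (-((q:R)*((q⁻¹:Rˣ):R))-1)*hq
      | linear_combination (((q:R)*((q⁻¹:Rˣ):R))+1)*hq
  · rw [h1]; module
  · rw [h2]
    match_scalars
    all_goals first
      | ring1
      | linear_combination (-((q:R)*((q⁻¹:Rˣ):R))-1)*hq
      | linear_combination (((q:R)*((q⁻¹:Rˣ):R))+1)*hq
  · rw [h6]
    match_scalars
    all_goals first
      | ring1
      | linear_combination (-((q:R)*((q⁻¹:Rˣ):R))-1)*hq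
      | linear_combination (((q:R)*((q⁻¹:Rˣ):R))+1)*hq
  · rw [← h7]; module
  · rw [← h3, ← h7]; module
end

section
/- Let R be a commutative ring, q ∈ R invertible, and A an associative unital R-algebra containing a, b, c, d satisfying the braided SL_q(2) relations. Define the second-solution coproduct Δ(a) = a⊗a + q⁴·c⊗b, Δ(b) = (1−q²)·a⊗b + b⊗a + q²·d⊗b, Δ(c) = (1−q²)·c⊗a + a⊗c + q²·c⊗d, Δ(d) = (q²−1)·a⊗a + (q⁴−q²)·c⊗b + q²·b⊗c + (1−q²)·a⊗d + (1−q²)·d⊗a + q²·d⊗d, the counit values ε(a) = ε(d) = 1, ε(b) = ε(c) = 0, and the antipode values S(a) = d, S(b) = −q⁻²·b, S(c) = −q⁻²·c, S(d) = q⁻²·a + (1 − q⁻²)·d. Then for each x ∈ {a,b,c,d}, writing Δ(x) = Σ u⊗v, one has Σ S(u)·v = ε(x)·1 and Σ u·S(v) = ε(x)·1 in A. -/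
/-- For `a, b, c, d` satisfying the braided `SL_q(2)` relations in an
associative unital `R`-algebra, the second-solution coproduct, counit values
`ε(a) = ε(d) = 1`, `ε(b) = ε(c) = 0`, and antipode values
`S(a) = d`, `S(b) = −q⁻² b`, `S(c) = −q⁻² c`, `S(d) = q⁻² a + (1−q⁻²) d`
satisfy the antipode identities `Σ S(u)·v = ε(x)·1 = Σ u·S(v)` on each generator. -/
theorem braided_second_antipode {R : Type*} [CommRing R] {A : Type*} [Ring A] [Algebra R A]
    (q : Rˣ) (a b c d : A)
    (h1 : b * a = ((q : R) ^ 2) • (a * b))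
    (h2 : c * a = (((q⁻¹ : Rˣ) : R) ^ 2) • (a * c))
    (h3 : a * d = d * a)
    (h4 : b * c = c * b + ((1 : R) - ((q⁻¹ : Rˣ) : R) ^ 2) • (a * (d - a)))
    (h5 : d * b = b * d + ((1 : R) - ((q⁻¹ : Rˣ) : R) ^ 2) • (a * b))
    (h6 : c * d = d * c + ((1 : R) - ((q⁻¹ : Rˣ) : R) ^ 2) • (c * a))
    (h7 : a * d - ((q : R) ^ 2) • (c * b) = 1) :
    let Q : R := (q : R)
    let Qi : R := ((q⁻¹ : Rˣ) : R)
    let Sa : A := d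
    let Sb : A := (-(Qi ^ 2)) • b
    let Sc : A := (-(Qi ^ 2)) • c
    let Sd : A := Qi ^ 2 • a + ((1 : R) - Qi ^ 2) • d
    -- Δ(a) = a⊗a + q⁴ c⊗b, ε(a) = 1
    (Sa * a + Q ^ 4 • (Sc * b) = 1) ∧
    (a * Sa + Q ^ 4 • (c * Sb) = 1) ∧
    -- Δ(b) = (1−q²) a⊗b + b⊗a + q² d⊗b, ε(b) = 0
    (((1 : R) - Q ^ 2) • (Sa * b) + Sb * a + Q ^ 2 • (Sd * b) = 0) ∧
    (((1 : R) - Q ^ 2) • (a * Sb) + b * Sa + Q ^ 2 • (d * Sb) = 0) ∧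
    -- Δ(c) = (1−q²) c⊗a + a⊗c + q² c⊗d, ε(c) = 0
    (((1 : R) - Q ^ 2) • (Sc * a) + Sa * c + Q ^ 2 • (Sc * d) = 0) ∧
    (((1 : R) - Q ^ 2) • (c * Sa) + a * Sc + Q ^ 2 • (c * Sd) = 0) ∧
    -- Δ(d) = (q²−1) a⊗a + (q⁴−q²) c⊗b + q² b⊗c + (1−q²) a⊗d + (1−q²) d⊗a + q² d⊗d, ε(d) = 1
    ((Q ^ 2 - 1) • (Sa * a) + (Q ^ 4 - Q ^ 2) • (Sc * b) + Q ^ 2 • (Sb * c)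
      + ((1 : R) - Q ^ 2) • (Sa * d) + ((1 : R) - Q ^ 2) • (Sd * a) + Q ^ 2 • (Sd * d) = 1) ∧
    ((Q ^ 2 - 1) • (a * Sa) + (Q ^ 4 - Q ^ 2) • (c * Sb) + Q ^ 2 • (b * Sc)
      + ((1 : R) - Q ^ 2) • (a * Sd) + ((1 : R) - Q ^ 2) • (d * Sa) + Q ^ 2 • (d * Sd) = 1) := by
  intro Q Qi Sa Sb Sc Sd
  have hv : Qi * Q = 1 := q.inv_mul
  refine ⟨?_, ?_, ?_, ?_, ?_, ?_, ?_, ?_⟩ <;>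
  · simp only [Sa, Sb, Sc, Sd, Q, Qi, smul_mul_assoc, mul_smul_comm, add_mul, mul_add,
      mul_sub, sub_mul, smul_add, smul_sub, smul_smul, h1, h2, h5, h6, h4, ← h3, ← h7]
    have hs : Qi ^ 2 * Q ^ 2 = 1 := by linear_combination (Qi * Q + 1) * hv
    match_scalars <;>
    first
      | ring1
      | linear_combination hs
      | linear_combination -hs
      | linear_combination (Q ^ 2) * hs
      | linear_combination (-(Q ^ 2)) * hs
      | linear_combination (Qi ^ 2) * hs
      | linear_combination (-(Qi ^ 2)) * hs
      | linear_combination (Q ^ 2 - 1) * hs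
      | linear_combination ((1 : R) - Q ^ 2) * hs
      | linear_combination (Qi ^ 2 - 1) * hs
      | linear_combination ((1 : R) - Qi ^ 2) * hs
      | linear_combination (Q ^ 2 * Qi ^ 2) * hs
      | linear_combination (-(Q ^ 2 * Qi ^ 2)) * hs
      | linear_combination (Q ^ 2 * (Qi ^ 2 - 1)) * hs
      | linear_combination (Q ^ 2 * ((1 : R) - Qi ^ 2)) * hs
      | linear_combination (Qi ^ 2 * (Q ^ 2 - 1)) * hs
      | linear_combination (Qi ^ 2 * ((1 : R) - Q ^ 2)) * hs
      | linear_combination (Q ^ 2 * Qi ^ 2 + 1) * hs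
      | linear_combination (Qi ^ 2 * (Q ^ 2 + Qi ^ 2 - 1)) * hs
      | linear_combination (Qi ^ 4) * hs
      | linear_combination (-(Qi ^ 4)) * hs
      | linear_combination (Qi ^ 2 + 1) * hs
end

section
/- Let R be a commutative ring, q ∈ R invertible, and V the free R-module with basis {a, b, c, d}. Let ψ : V⊗V → V⊗V be the R-linear map determined on basis tensors by the first-solution braiding formulas. Then the element t := q⁻¹·a + q·d is bosonic: for every basis vector x ∈ {a,b,c,d}, ψ(t⊗x) = x⊗t and ψ(x⊗t) = t⊗x in V⊗V. -/
open scoped TensorProduct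
open TensorProduct

/-- On the free `R`-module `V` with basis `{a, b, c, d}`, the
`R`-linear map `ψ : V ⊗ V → V ⊗ V` determined on basis tensors by the
first-solution braiding formulas makes `t = q⁻¹ a + q d` bosonic:
`ψ(t ⊗ x) = x ⊗ t` and `ψ(x ⊗ t) = t ⊗ x` for every basis vector `x`. -/
theorem first_braiding_trace_bosonic {R : Type*} [CommRing R] (q : Rˣ)
    (ψ : ((Fin 4 → R) ⊗[R] (Fin 4 → R)) →ₗ[R] ((Fin 4 → R) ⊗[R] (Fin 4 → R)))
    -- the basis vectors
    (a b c d : Fin 4 → R)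
    (ha : a = ![1, 0, 0, 0]) (hb : b = ![0, 1, 0, 0])
    (hc : c = ![0, 0, 1, 0]) (hd : d = ![0, 0, 0, 1])
    -- the first-solution braiding formulas
    (haa : ψ (a ⊗ₜ[R] a) = a ⊗ₜ[R] a + ((1 : R) - (q : R) ^ 2) • (b ⊗ₜ[R] c))
    (hab : ψ (a ⊗ₜ[R] b) = b ⊗ₜ[R] a)
    (hac : ψ (a ⊗ₜ[R] c) = c ⊗ₜ[R] a + ((1 : R) - (q : R) ^ 2) • ((d - a) ⊗ₜ[R] c))
    (had : ψ (a ⊗ₜ[R] d) = d ⊗ₜ[R] a + ((1 : R) - ((q⁻¹ : Rˣ) : R) ^ 2) • (b ⊗ₜ[R] c))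
    (hba : ψ (b ⊗ₜ[R] a) = a ⊗ₜ[R] b + ((1 : R) - (q : R) ^ 2) • (b ⊗ₜ[R] (d - a)))
    (hbb : ψ (b ⊗ₜ[R] b) = ((q : R) ^ 2) • (b ⊗ₜ[R] b))
    (hbc : ψ (b ⊗ₜ[R] c) = (((q⁻¹ : Rˣ) : R) ^ 2) • (c ⊗ₜ[R] b)
      + (((1 : R) + (q : R) ^ 2) * ((1 : R) - ((q⁻¹ : Rˣ) : R) ^ 2) ^ 2) • (b ⊗ₜ[R] c)
      - ((1 : R) - ((q⁻¹ : Rˣ) : R) ^ 2) • ((d - a) ⊗ₜ[R] (d - a)))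
    (hbd : ψ (b ⊗ₜ[R] d) = d ⊗ₜ[R] b + ((1 : R) - ((q⁻¹ : Rˣ) : R) ^ 2) • (b ⊗ₜ[R] (d - a)))
    (hca : ψ (c ⊗ₜ[R] a) = a ⊗ₜ[R] c)
    (hcb : ψ (c ⊗ₜ[R] b) = (((q⁻¹ : Rˣ) : R) ^ 2) • (b ⊗ₜ[R] c))
    (hcc : ψ (c ⊗ₜ[R] c) = ((q : R) ^ 2) • (c ⊗ₜ[R] c))
    (hcd : ψ (c ⊗ₜ[R] d) = d ⊗ₜ[R] c)
    (hda : ψ (d ⊗ₜ[R] a) = a ⊗ₜ[R] d + ((1 : R) - ((q⁻¹ : Rˣ) : R) ^ 2) • (b ⊗ₜ[R] c))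
    (hdb : ψ (d ⊗ₜ[R] b) = b ⊗ₜ[R] d)
    (hdc : ψ (d ⊗ₜ[R] c) = c ⊗ₜ[R] d + ((1 : R) - ((q⁻¹ : Rˣ) : R) ^ 2) • ((d - a) ⊗ₜ[R] c))
    (hdd : ψ (d ⊗ₜ[R] d) = d ⊗ₜ[R] d
      - (((q⁻¹ : Rˣ) : R) ^ 2 * ((1 : R) - ((q⁻¹ : Rˣ) : R) ^ 2)) • (b ⊗ₜ[R] c)) :
    let t : Fin 4 → R := ((q⁻¹ : Rˣ) : R) • a + (q : R) • d
    (ψ (t ⊗ₜ[R] a) = a ⊗ₜ[R] t) ∧ (ψ (a ⊗ₜ[R] t) = t ⊗ₜ[R] a) ∧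
    (ψ (t ⊗ₜ[R] b) = b ⊗ₜ[R] t) ∧ (ψ (b ⊗ₜ[R] t) = t ⊗ₜ[R] b) ∧
    (ψ (t ⊗ₜ[R] c) = c ⊗ₜ[R] t) ∧ (ψ (c ⊗ₜ[R] t) = t ⊗ₜ[R] c) ∧
    (ψ (t ⊗ₜ[R] d) = d ⊗ₜ[R] t) ∧ (ψ (d ⊗ₜ[R] t) = t ⊗ₜ[R] d) := by

  intro t
  have key : ((q⁻¹ : Rˣ) : R) * (q : R) = 1 := q.inv_mul
  have expand : ∀ x : Fin 4 → R, t ⊗ₜ[R] x = ((q⁻¹ : Rˣ) : R) • (a ⊗ₜ[R] x) + (q : R) • (d ⊗ₜ[R] x) := by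
    intro x; simp [t, add_tmul, smul_tmul']
  have expand' : ∀ x : Fin 4 → R, x ⊗ₜ[R] t = ((q⁻¹ : Rˣ) : R) • (x ⊗ₜ[R] a) + (q : R) • (x ⊗ₜ[R] d) := by
    intro x; simp [t, tmul_add]
  refine ⟨?_, ?_, ?_, ?_, ?_, ?_, ?_, ?_⟩ <;>
  · simp only [expand, expand', map_add, map_smul, haa, hab, hac, had, hba, hbb, hbc, hbd,
      hca, hcb, hcc, hcd, hda, hdb, hdc, hdd, sub_tmul, tmul_sub, smul_sub, smul_add]
    try match_scalars
    all_goals try ring1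
    all_goals try linear_combination (((q : R)) + ((q⁻¹ : Rˣ) : R)) * key
    all_goals try linear_combination -(((q : R)) + ((q⁻¹ : Rˣ) : R)) * key
    all_goals try linear_combination -(((q⁻¹ : Rˣ) : R) * (1 - ((q⁻¹ : Rˣ) : R)^2)) * key
end

section
/- Let R be a commutative ring, q ∈ R invertible, and V the free R-module with basis {a, b, c, d}. Let ψ : V⊗V → V⊗V be the R-linear map determined on basis tensors by the second-solution braiding formulas. Then the element t := q⁻¹·a + q·d is bosonic: for every basis vector x ∈ {a,b,c,d}, ψ(t⊗x) = x⊗t and ψ(x⊗t) = t⊗x in V⊗V. -/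
open scoped TensorProduct
open TensorProduct

/-- On the free `R`-module `V` with basis `{a, b, c, d}`, the
`R`-linear map `ψ : V ⊗ V → V ⊗ V` determined on basis tensors by the
second-solution braiding formulas makes `t = q⁻¹ a + q d` bosonic:
`ψ(t ⊗ x) = x ⊗ t` and `ψ(x ⊗ t) = t ⊗ x` for every basis vector `x`. -/
theorem second_braiding_trace_bosonic {R : Type*} [CommRing R] (q : Rˣ)
    (ψ : ((Fin 4 → R) ⊗[R] (Fin 4 → R)) →ₗ[R] ((Fin 4 → R) ⊗[R] (Fin 4 → R)))
    -- the basis vectors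
    (a b c d : Fin 4 → R)
    (ha : a = ![1, 0, 0, 0]) (hb : b = ![0, 1, 0, 0])
    (hc : c = ![0, 0, 1, 0]) (hd : d = ![0, 0, 0, 1])
    -- the second-solution braiding formulas
    (haa : ψ (a ⊗ₜ[R] a) = a ⊗ₜ[R] a + ((q : R) ^ 4 - (q : R) ^ 2) • (c ⊗ₜ[R] b))
    (hab : ψ (a ⊗ₜ[R] b) = b ⊗ₜ[R] a + ((1 : R) - (q : R) ^ 2) • (a ⊗ₜ[R] b)
      + ((q : R) ^ 2 - 1) • (d ⊗ₜ[R] b))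
    (hac : ψ (a ⊗ₜ[R] c) = c ⊗ₜ[R] a)
    (had : ψ (a ⊗ₜ[R] d) = d ⊗ₜ[R] a + ((1 : R) - (q : R) ^ 2) • (c ⊗ₜ[R] b))
    (hba : ψ (b ⊗ₜ[R] a) = a ⊗ₜ[R] b)
    (hbb : ψ (b ⊗ₜ[R] b) = (((q⁻¹ : Rˣ) : R) ^ 2) • (b ⊗ₜ[R] b))
    (hbc : ψ (b ⊗ₜ[R] c) = ((q : R) ^ 2) • (c ⊗ₜ[R] b))
    (hbd : ψ (b ⊗ₜ[R] d) = d ⊗ₜ[R] b)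
    (hca : ψ (c ⊗ₜ[R] a) = a ⊗ₜ[R] c + ((1 : R) - (q : R) ^ 2) • (c ⊗ₜ[R] a)
      + ((q : R) ^ 2 - 1) • (c ⊗ₜ[R] d))
    (hcb : ψ (c ⊗ₜ[R] b) = ((q : R) ^ 2 - 1) • (a ⊗ₜ[R] a) + ((q : R) ^ 2) • (b ⊗ₜ[R] c)
      + ((q : R) ^ 4 - (q : R) ^ 2 + ((q⁻¹ : Rˣ) : R) ^ 2 - 1) • (c ⊗ₜ[R] b)
      + ((1 : R) - (q : R) ^ 2) • (a ⊗ₜ[R] d) + ((1 : R) - (q : R) ^ 2) • (d ⊗ₜ[R] a)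
      + ((q : R) ^ 2 - 1) • (d ⊗ₜ[R] d))
    (hcc : ψ (c ⊗ₜ[R] c) = (((q⁻¹ : Rˣ) : R) ^ 2) • (c ⊗ₜ[R] c))
    (hcd : ψ (c ⊗ₜ[R] d) = d ⊗ₜ[R] c + ((1 : R) - ((q⁻¹ : Rˣ) : R) ^ 2) • (c ⊗ₜ[R] a)
      + (((q⁻¹ : Rˣ) : R) ^ 2 - 1) • (c ⊗ₜ[R] d))
    (hda : ψ (d ⊗ₜ[R] a) = a ⊗ₜ[R] d + ((1 : R) - (q : R) ^ 2) • (c ⊗ₜ[R] b))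
    (hdb : ψ (d ⊗ₜ[R] b) = b ⊗ₜ[R] d + ((1 : R) - ((q⁻¹ : Rˣ) : R) ^ 2) • (a ⊗ₜ[R] b)
      + (((q⁻¹ : Rˣ) : R) ^ 2 - 1) • (d ⊗ₜ[R] b))
    (hdc : ψ (d ⊗ₜ[R] c) = c ⊗ₜ[R] d)
    (hdd : ψ (d ⊗ₜ[R] d) = d ⊗ₜ[R] d + ((1 : R) - ((q⁻¹ : Rˣ) : R) ^ 2) • (c ⊗ₜ[R] b)) :
    let t : Fin 4 → R := ((q⁻¹ : Rˣ) : R) • a + (q : R) • d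
    (ψ (t ⊗ₜ[R] a) = a ⊗ₜ[R] t) ∧ (ψ (a ⊗ₜ[R] t) = t ⊗ₜ[R] a) ∧
    (ψ (t ⊗ₜ[R] b) = b ⊗ₜ[R] t) ∧ (ψ (b ⊗ₜ[R] t) = t ⊗ₜ[R] b) ∧
    (ψ (t ⊗ₜ[R] c) = c ⊗ₜ[R] t) ∧ (ψ (c ⊗ₜ[R] t) = t ⊗ₜ[R] c) ∧
    (ψ (t ⊗ₜ[R] d) = d ⊗ₜ[R] t) ∧ (ψ (d ⊗ₜ[R] t) = t ⊗ₜ[R] d) := by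
  intro t
  have hq : (q : R) * ((q⁻¹ : Rˣ) : R) = 1 := q.mul_inv
  refine ⟨?_, ?_, ?_, ?_, ?_, ?_, ?_, ?_⟩ <;>
  · simp only [t, add_tmul, tmul_add, tmul_smul, ← smul_tmul', map_add, map_smul,
      haa, hab, hac, had, hba, hbb, hbc, hbd, hca, hcb, hcc, hcd, hda, hdb, hdc, hdd]
    all_goals match_scalars <;>
    first
      | ring1
      | linear_combination (((q : R))^3 - (q : R)) * hq
      | linear_combination ((q : R) - ((q : R))^3) * hq
      | linear_combination ((q : R) + ((q⁻¹ : Rˣ) : R)) * hq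
      | linear_combination (-((q : R) + ((q⁻¹ : Rˣ) : R))) * hq
end

section
/- Let R be a commutative ring with invertible elements q and r, and let A be an associative unital R-algebra containing two quadruples a₁,b₁,c₁,d₁ and a₂,b₂,c₂,d₂, each satisfying the two-parameter (q,r)-deformed relations, such that every element of the first quadruple commutes with every element of the second. Set A' := a₁a₂ + q⁴·c₁b₂, B' := (1−q²)·a₁b₂ + b₁a₂ + q²·d₁b₂, C' := (1−q²)·c₁a₂ + a₁c₂ + q²·c₁d₂, D' := (q²−1)·a₁a₂ + (q⁴−q²)·c₁b₂ + q²·b₁c₂ + (1−q²)·a₁d₂ + (1−q²)·d₁a₂ + q²·d₁d₂. Then (A', B', C', D') again satisfies the two-parameter (q,r)-deformed relations. -/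
set_option maxHeartbeats 4000000 in
/-- If two quadruples in an associative unital `R`-algebra each
satisfy the two-parameter `(q,r)`-deformed relations and mutually commute, then
the quadruple built from them by the second-solution coproduct formulas again
satisfies the two-parameter `(q,r)`-deformed relations. -/
theorem two_param_coproduct_hom {R : Type*} [CommRing R] {A : Type*} [Ring A] [Algebra R A]
    (q r : Rˣ) (a₁ b₁ c₁ d₁ a₂ b₂ c₂ d₂ : A)
    -- first quadruple satisfies the (q,r)-relations
    (h11 : a₁ * b₁ = (r : R) • (b₁ * a₁))
    (h12 : a₁ * c₁ = (r : R) • (c₁ * a₁))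
    (h13 : b₁ * c₁ = c₁ * b₁)
    (h14 : b₁ * d₁ = (r : R) • (d₁ * b₁)
      + ((((q⁻¹ : Rˣ) : R) ^ 2 - 1) * ((r : R) ^ 2 - 1)) • (b₁ * a₁))
    (h15 : c₁ * d₁ = (r : R) • (d₁ * c₁)
      + ((((q⁻¹ : Rˣ) : R) ^ 2 - 1) * ((r : R) ^ 2 - 1)) • (c₁ * a₁))
    (h16 : a₁ * d₁ - d₁ * a₁ = (((r : R) - ((r⁻¹ : Rˣ) : R)) * (q : R) ^ 2) • (b₁ * c₁))
    (h17 : ((q : R) ^ 2) • (d₁ * a₁) + ((1 : R) - (q : R) ^ 2) • (a₁ * a₁)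
      - (((r⁻¹ : Rˣ) : R) * (q : R) ^ 4) • (c₁ * b₁) = 1)
    -- second quadruple satisfies the (q,r)-relations
    (h21 : a₂ * b₂ = (r : R) • (b₂ * a₂))
    (h22 : a₂ * c₂ = (r : R) • (c₂ * a₂))
    (h23 : b₂ * c₂ = c₂ * b₂)
    (h24 : b₂ * d₂ = (r : R) • (d₂ * b₂)
      + ((((q⁻¹ : Rˣ) : R) ^ 2 - 1) * ((r : R) ^ 2 - 1)) • (b₂ * a₂))
    (h25 : c₂ * d₂ = (r : R) • (d₂ * c₂)
      + ((((q⁻¹ : Rˣ) : R) ^ 2 - 1) * ((r : R) ^ 2 - 1)) • (c₂ * a₂))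
    (h26 : a₂ * d₂ - d₂ * a₂ = (((r : R) - ((r⁻¹ : Rˣ) : R)) * (q : R) ^ 2) • (b₂ * c₂))
    (h27 : ((q : R) ^ 2) • (d₂ * a₂) + ((1 : R) - (q : R) ^ 2) • (a₂ * a₂)
      - (((r⁻¹ : Rˣ) : R) * (q : R) ^ 4) • (c₂ * b₂) = 1)
    -- the two quadruples commute elementwise
    (hcomm : ∀ x ∈ ([a₁, b₁, c₁, d₁] : List A), ∀ y ∈ ([a₂, b₂, c₂, d₂] : List A),
      x * y = y * x) :
    let Q : R := (q : R)
    let A' : A := a₁ * a₂ + Q ^ 4 • (c₁ * b₂)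
    let B' : A := ((1 : R) - Q ^ 2) • (a₁ * b₂) + b₁ * a₂ + Q ^ 2 • (d₁ * b₂)
    let C' : A := ((1 : R) - Q ^ 2) • (c₁ * a₂) + a₁ * c₂ + Q ^ 2 • (c₁ * d₂)
    let D' : A := (Q ^ 2 - 1) • (a₁ * a₂) + (Q ^ 4 - Q ^ 2) • (c₁ * b₂) + Q ^ 2 • (b₁ * c₂)
      + ((1 : R) - Q ^ 2) • (a₁ * d₂) + ((1 : R) - Q ^ 2) • (d₁ * a₂) + Q ^ 2 • (d₁ * d₂)
    (A' * B' = (r : R) • (B' * A')) ∧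
    (A' * C' = (r : R) • (C' * A')) ∧
    (B' * C' = C' * B') ∧
    (B' * D' = (r : R) • (D' * B')
      + ((((q⁻¹ : Rˣ) : R) ^ 2 - 1) * ((r : R) ^ 2 - 1)) • (B' * A')) ∧
    (C' * D' = (r : R) • (D' * C')
      + ((((q⁻¹ : Rˣ) : R) ^ 2 - 1) * ((r : R) ^ 2 - 1)) • (C' * A')) ∧
    (A' * D' - D' * A' = (((r : R) - ((r⁻¹ : Rˣ) : R)) * (q : R) ^ 2) • (B' * C')) ∧
    (((q : R) ^ 2) • (D' * A') + ((1 : R) - (q : R) ^ 2) • (A' * A')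
      - (((r⁻¹ : Rˣ) : R) * (q : R) ^ 4) • (C' * B') = 1) := by
  intro Q A' B' C' D'
  have hq2 : ((q⁻¹ : Rˣ) : R)^2 * (q : R)^2 = 1 := by
    rw [← mul_pow, ← Units.val_mul, inv_mul_cancel, Units.val_one, one_pow]
  have hda1 : d₁*a₁ = (((q⁻¹ : Rˣ) : R)^2) • (1:A) - (((q⁻¹ : Rˣ) : R)^2 * ((1:R) - (q : R)^2)) • (a₁*a₁)
      + (((q⁻¹ : Rˣ) : R)^2 * (((r⁻¹ : Rˣ) : R) * (q : R)^4)) • (c₁*b₁) := by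
    have e := congrArg (fun z : A => (((q⁻¹ : Rˣ) : R)^2 : R) • z) h17
    simp only [smul_add, smul_sub, smul_smul, hq2, one_smul] at e
    rw [← e]; abel
  have had1 : a₁*d₁ = d₁*a₁ + (((r : R) - ((r⁻¹ : Rˣ) : R)) * (q : R)^2) • (b₁*c₁) := by
    rw [← h16]; abel
  have hda2 : d₂*a₂ = (((q⁻¹ : Rˣ) : R)^2) • (1:A) - (((q⁻¹ : Rˣ) : R)^2 * ((1:R) - (q : R)^2)) • (a₂*a₂)
      + (((q⁻¹ : Rˣ) : R)^2 * (((r⁻¹ : Rˣ) : R) * (q : R)^4)) • (c₂*b₂) := by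
    have e := congrArg (fun z : A => (((q⁻¹ : Rˣ) : R)^2 : R) • z) h27
    simp only [smul_add, smul_sub, smul_smul, hq2, one_smul] at e
    rw [← e]; abel
  have had2 : a₂*d₂ = d₂*a₂ + (((r : R) - ((r⁻¹ : Rˣ) : R)) * (q : R)^2) • (b₂*c₂) := by
    rw [← h26]; abel
  simp only [Q, A', B', C', D', Algebra.smul_def, map_mul, map_sub, map_add, map_one,
    map_pow] at h11 h12 h13 h14 h15 h21 h22 h23 h24 h25 hda1 had1 hda2 had2 ⊢
  have hp2 : ∀ z : A, z^2 = z*z := fun z => pow_two z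
  have hp4 : ∀ z : A, z^4 = z*(z*(z*z)) := fun z => by noncomm_ring
  have k_x_xi : (algebraMap R A (q : R)) * (algebraMap R A ((q⁻¹ : Rˣ) : R)) = 1 := by rw [← map_mul, Units.mul_inv, map_one]
  have k_x_xiT : ∀ t : A, (algebraMap R A (q : R)) * ((algebraMap R A ((q⁻¹ : Rˣ) : R)) * t) = t := fun t => by rw [← mul_assoc, k_x_xi, one_mul]
  have k_xi_x : (algebraMap R A ((q⁻¹ : Rˣ) : R)) * (algebraMap R A (q : R)) = 1 := by rw [← map_mul, Units.inv_mul, map_one]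
  have k_xi_xT : ∀ t : A, (algebraMap R A ((q⁻¹ : Rˣ) : R)) * ((algebraMap R A (q : R)) * t) = t := fun t => by rw [← mul_assoc, k_xi_x, one_mul]
  have k_y_yi : (algebraMap R A (r : R)) * (algebraMap R A ((r⁻¹ : Rˣ) : R)) = 1 := by rw [← map_mul, Units.mul_inv, map_one]
  have k_y_yiT : ∀ t : A, (algebraMap R A (r : R)) * ((algebraMap R A ((r⁻¹ : Rˣ) : R)) * t) = t := fun t => by rw [← mul_assoc, k_y_yi, one_mul]
  have k_yi_y : (algebraMap R A ((r⁻¹ : Rˣ) : R)) * (algebraMap R A (r : R)) = 1 := by rw [← map_mul, Units.inv_mul, map_one]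
  have k_yi_yT : ∀ t : A, (algebraMap R A ((r⁻¹ : Rˣ) : R)) * ((algebraMap R A (r : R)) * t) = t := fun t => by rw [← mul_assoc, k_yi_y, one_mul]
  have o_y_x : (algebraMap R A (r : R)) * (algebraMap R A (q : R)) = (algebraMap R A (q : R)) * (algebraMap R A (r : R)) := (Algebra.commutes (q : R) (algebraMap R A (r : R))).symm
  have o_y_xT : ∀ t : A, (algebraMap R A (r : R)) * ((algebraMap R A (q : R)) * t) = (algebraMap R A (q : R)) * ((algebraMap R A (r : R)) * t) := fun t => by rw [← mul_assoc, o_y_x, mul_assoc]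
  have o_y_xi : (algebraMap R A (r : R)) * (algebraMap R A ((q⁻¹ : Rˣ) : R)) = (algebraMap R A ((q⁻¹ : Rˣ) : R)) * (algebraMap R A (r : R)) := (Algebra.commutes ((q⁻¹ : Rˣ) : R) (algebraMap R A (r : R))).symm
  have o_y_xiT : ∀ t : A, (algebraMap R A (r : R)) * ((algebraMap R A ((q⁻¹ : Rˣ) : R)) * t) = (algebraMap R A ((q⁻¹ : Rˣ) : R)) * ((algebraMap R A (r : R)) * t) := fun t => by rw [← mul_assoc, o_y_xi, mul_assoc]
  have o_yi_x : (algebraMap R A ((r⁻¹ : Rˣ) : R)) * (algebraMap R A (q : R)) = (algebraMap R A (q : R)) * (algebraMap R A ((r⁻¹ : Rˣ) : R)) := (Algebra.commutes (q : R) (algebraMap R A ((r⁻¹ : Rˣ) : R))).symm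
  have o_yi_xT : ∀ t : A, (algebraMap R A ((r⁻¹ : Rˣ) : R)) * ((algebraMap R A (q : R)) * t) = (algebraMap R A (q : R)) * ((algebraMap R A ((r⁻¹ : Rˣ) : R)) * t) := fun t => by rw [← mul_assoc, o_yi_x, mul_assoc]
  have o_yi_xi : (algebraMap R A ((r⁻¹ : Rˣ) : R)) * (algebraMap R A ((q⁻¹ : Rˣ) : R)) = (algebraMap R A ((q⁻¹ : Rˣ) : R)) * (algebraMap R A ((r⁻¹ : Rˣ) : R)) := (Algebra.commutes ((q⁻¹ : Rˣ) : R) (algebraMap R A ((r⁻¹ : Rˣ) : R))).symm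
  have o_yi_xiT : ∀ t : A, (algebraMap R A ((r⁻¹ : Rˣ) : R)) * ((algebraMap R A ((q⁻¹ : Rˣ) : R)) * t) = (algebraMap R A ((q⁻¹ : Rˣ) : R)) * ((algebraMap R A ((r⁻¹ : Rˣ) : R)) * t) := fun t => by rw [← mul_assoc, o_yi_xi, mul_assoc]
  have m_a₁_x : a₁ * (algebraMap R A (q : R)) = (algebraMap R A (q : R)) * a₁ := (Algebra.commutes (q : R) a₁).symm
  have m_a₁_xT : ∀ t : A, a₁ * ((algebraMap R A (q : R)) * t) = (algebraMap R A (q : R)) * (a₁ * t) := fun t => by rw [← mul_assoc, m_a₁_x, mul_assoc]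
  have m_a₁_xi : a₁ * (algebraMap R A ((q⁻¹ : Rˣ) : R)) = (algebraMap R A ((q⁻¹ : Rˣ) : R)) * a₁ := (Algebra.commutes ((q⁻¹ : Rˣ) : R) a₁).symm
  have m_a₁_xiT : ∀ t : A, a₁ * ((algebraMap R A ((q⁻¹ : Rˣ) : R)) * t) = (algebraMap R A ((q⁻¹ : Rˣ) : R)) * (a₁ * t) := fun t => by rw [← mul_assoc, m_a₁_xi, mul_assoc]
  have m_a₁_y : a₁ * (algebraMap R A (r : R)) = (algebraMap R A (r : R)) * a₁ := (Algebra.commutes (r : R) a₁).symm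
  have m_a₁_yT : ∀ t : A, a₁ * ((algebraMap R A (r : R)) * t) = (algebraMap R A (r : R)) * (a₁ * t) := fun t => by rw [← mul_assoc, m_a₁_y, mul_assoc]
  have m_a₁_yi : a₁ * (algebraMap R A ((r⁻¹ : Rˣ) : R)) = (algebraMap R A ((r⁻¹ : Rˣ) : R)) * a₁ := (Algebra.commutes ((r⁻¹ : Rˣ) : R) a₁).symm
  have m_a₁_yiT : ∀ t : A, a₁ * ((algebraMap R A ((r⁻¹ : Rˣ) : R)) * t) = (algebraMap R A ((r⁻¹ : Rˣ) : R)) * (a₁ * t) := fun t => by rw [← mul_assoc, m_a₁_yi, mul_assoc]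
  have m_b₁_x : b₁ * (algebraMap R A (q : R)) = (algebraMap R A (q : R)) * b₁ := (Algebra.commutes (q : R) b₁).symm
  have m_b₁_xT : ∀ t : A, b₁ * ((algebraMap R A (q : R)) * t) = (algebraMap R A (q : R)) * (b₁ * t) := fun t => by rw [← mul_assoc, m_b₁_x, mul_assoc]
  have m_b₁_xi : b₁ * (algebraMap R A ((q⁻¹ : Rˣ) : R)) = (algebraMap R A ((q⁻¹ : Rˣ) : R)) * b₁ := (Algebra.commutes ((q⁻¹ : Rˣ) : R) b₁).symm
  have m_b₁_xiT : ∀ t : A, b₁ * ((algebraMap R A ((q⁻¹ : Rˣ) : R)) * t) = (algebraMap R A ((q⁻¹ : Rˣ) : R)) * (b₁ * t) := fun t => by rw [← mul_assoc, m_b₁_xi, mul_assoc]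
  have m_b₁_y : b₁ * (algebraMap R A (r : R)) = (algebraMap R A (r : R)) * b₁ := (Algebra.commutes (r : R) b₁).symm
  have m_b₁_yT : ∀ t : A, b₁ * ((algebraMap R A (r : R)) * t) = (algebraMap R A (r : R)) * (b₁ * t) := fun t => by rw [← mul_assoc, m_b₁_y, mul_assoc]
  have m_b₁_yi : b₁ * (algebraMap R A ((r⁻¹ : Rˣ) : R)) = (algebraMap R A ((r⁻¹ : Rˣ) : R)) * b₁ := (Algebra.commutes ((r⁻¹ : Rˣ) : R) b₁).symm
  have m_b₁_yiT : ∀ t : A, b₁ * ((algebraMap R A ((r⁻¹ : Rˣ) : R)) * t) = (algebraMap R A ((r⁻¹ : Rˣ) : R)) * (b₁ * t) := fun t => by rw [← mul_assoc, m_b₁_yi, mul_assoc]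
  have m_c₁_x : c₁ * (algebraMap R A (q : R)) = (algebraMap R A (q : R)) * c₁ := (Algebra.commutes (q : R) c₁).symm
  have m_c₁_xT : ∀ t : A, c₁ * ((algebraMap R A (q : R)) * t) = (algebraMap R A (q : R)) * (c₁ * t) := fun t => by rw [← mul_assoc, m_c₁_x, mul_assoc]
  have m_c₁_xi : c₁ * (algebraMap R A ((q⁻¹ : Rˣ) : R)) = (algebraMap R A ((q⁻¹ : Rˣ) : R)) * c₁ := (Algebra.commutes ((q⁻¹ : Rˣ) : R) c₁).symm
  have m_c₁_xiT : ∀ t : A, c₁ * ((algebraMap R A ((q⁻¹ : Rˣ) : R)) * t) = (algebraMap R A ((q⁻¹ : Rˣ) : R)) * (c₁ * t) := fun t => by rw [← mul_assoc, m_c₁_xi, mul_assoc]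
  have m_c₁_y : c₁ * (algebraMap R A (r : R)) = (algebraMap R A (r : R)) * c₁ := (Algebra.commutes (r : R) c₁).symm
  have m_c₁_yT : ∀ t : A, c₁ * ((algebraMap R A (r : R)) * t) = (algebraMap R A (r : R)) * (c₁ * t) := fun t => by rw [← mul_assoc, m_c₁_y, mul_assoc]
  have m_c₁_yi : c₁ * (algebraMap R A ((r⁻¹ : Rˣ) : R)) = (algebraMap R A ((r⁻¹ : Rˣ) : R)) * c₁ := (Algebra.commutes ((r⁻¹ : Rˣ) : R) c₁).symm
  have m_c₁_yiT : ∀ t : A, c₁ * ((algebraMap R A ((r⁻¹ : Rˣ) : R)) * t) = (algebraMap R A ((r⁻¹ : Rˣ) : R)) * (c₁ * t) := fun t => by rw [← mul_assoc, m_c₁_yi, mul_assoc]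
  have m_d₁_x : d₁ * (algebraMap R A (q : R)) = (algebraMap R A (q : R)) * d₁ := (Algebra.commutes (q : R) d₁).symm
  have m_d₁_xT : ∀ t : A, d₁ * ((algebraMap R A (q : R)) * t) = (algebraMap R A (q : R)) * (d₁ * t) := fun t => by rw [← mul_assoc, m_d₁_x, mul_assoc]
  have m_d₁_xi : d₁ * (algebraMap R A ((q⁻¹ : Rˣ) : R)) = (algebraMap R A ((q⁻¹ : Rˣ) : R)) * d₁ := (Algebra.commutes ((q⁻¹ : Rˣ) : R) d₁).symm
  have m_d₁_xiT : ∀ t : A, d₁ * ((algebraMap R A ((q⁻¹ : Rˣ) : R)) * t) = (algebraMap R A ((q⁻¹ : Rˣ) : R)) * (d₁ * t) := fun t => by rw [← mul_assoc, m_d₁_xi, mul_assoc]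
  have m_d₁_y : d₁ * (algebraMap R A (r : R)) = (algebraMap R A (r : R)) * d₁ := (Algebra.commutes (r : R) d₁).symm
  have m_d₁_yT : ∀ t : A, d₁ * ((algebraMap R A (r : R)) * t) = (algebraMap R A (r : R)) * (d₁ * t) := fun t => by rw [← mul_assoc, m_d₁_y, mul_assoc]
  have m_d₁_yi : d₁ * (algebraMap R A ((r⁻¹ : Rˣ) : R)) = (algebraMap R A ((r⁻¹ : Rˣ) : R)) * d₁ := (Algebra.commutes ((r⁻¹ : Rˣ) : R) d₁).symm
  have m_d₁_yiT : ∀ t : A, d₁ * ((algebraMap R A ((r⁻¹ : Rˣ) : R)) * t) = (algebraMap R A ((r⁻¹ : Rˣ) : R)) * (d₁ * t) := fun t => by rw [← mul_assoc, m_d₁_yi, mul_assoc]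
  have m_a₂_x : a₂ * (algebraMap R A (q : R)) = (algebraMap R A (q : R)) * a₂ := (Algebra.commutes (q : R) a₂).symm
  have m_a₂_xT : ∀ t : A, a₂ * ((algebraMap R A (q : R)) * t) = (algebraMap R A (q : R)) * (a₂ * t) := fun t => by rw [← mul_assoc, m_a₂_x, mul_assoc]
  have m_a₂_xi : a₂ * (algebraMap R A ((q⁻¹ : Rˣ) : R)) = (algebraMap R A ((q⁻¹ : Rˣ) : R)) * a₂ := (Algebra.commutes ((q⁻¹ : Rˣ) : R) a₂).symm
  have m_a₂_xiT : ∀ t : A, a₂ * ((algebraMap R A ((q⁻¹ : Rˣ) : R)) * t) = (algebraMap R A ((q⁻¹ : Rˣ) : R)) * (a₂ * t) := fun t => by rw [← mul_assoc, m_a₂_xi, mul_assoc]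
  have m_a₂_y : a₂ * (algebraMap R A (r : R)) = (algebraMap R A (r : R)) * a₂ := (Algebra.commutes (r : R) a₂).symm
  have m_a₂_yT : ∀ t : A, a₂ * ((algebraMap R A (r : R)) * t) = (algebraMap R A (r : R)) * (a₂ * t) := fun t => by rw [← mul_assoc, m_a₂_y, mul_assoc]
  have m_a₂_yi : a₂ * (algebraMap R A ((r⁻¹ : Rˣ) : R)) = (algebraMap R A ((r⁻¹ : Rˣ) : R)) * a₂ := (Algebra.commutes ((r⁻¹ : Rˣ) : R) a₂).symm
  have m_a₂_yiT : ∀ t : A, a₂ * ((algebraMap R A ((r⁻¹ : Rˣ) : R)) * t) = (algebraMap R A ((r⁻¹ : Rˣ) : R)) * (a₂ * t) := fun t => by rw [← mul_assoc, m_a₂_yi, mul_assoc]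
  have m_b₂_x : b₂ * (algebraMap R A (q : R)) = (algebraMap R A (q : R)) * b₂ := (Algebra.commutes (q : R) b₂).symm
  have m_b₂_xT : ∀ t : A, b₂ * ((algebraMap R A (q : R)) * t) = (algebraMap R A (q : R)) * (b₂ * t) := fun t => by rw [← mul_assoc, m_b₂_x, mul_assoc]
  have m_b₂_xi : b₂ * (algebraMap R A ((q⁻¹ : Rˣ) : R)) = (algebraMap R A ((q⁻¹ : Rˣ) : R)) * b₂ := (Algebra.commutes ((q⁻¹ : Rˣ) : R) b₂).symm
  have m_b₂_xiT : ∀ t : A, b₂ * ((algebraMap R A ((q⁻¹ : Rˣ) : R)) * t) = (algebraMap R A ((q⁻¹ : Rˣ) : R)) * (b₂ * t) := fun t => by rw [← mul_assoc, m_b₂_xi, mul_assoc]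
  have m_b₂_y : b₂ * (algebraMap R A (r : R)) = (algebraMap R A (r : R)) * b₂ := (Algebra.commutes (r : R) b₂).symm
  have m_b₂_yT : ∀ t : A, b₂ * ((algebraMap R A (r : R)) * t) = (algebraMap R A (r : R)) * (b₂ * t) := fun t => by rw [← mul_assoc, m_b₂_y, mul_assoc]
  have m_b₂_yi : b₂ * (algebraMap R A ((r⁻¹ : Rˣ) : R)) = (algebraMap R A ((r⁻¹ : Rˣ) : R)) * b₂ := (Algebra.commutes ((r⁻¹ : Rˣ) : R) b₂).symm
  have m_b₂_yiT : ∀ t : A, b₂ * ((algebraMap R A ((r⁻¹ : Rˣ) : R)) * t) = (algebraMap R A ((r⁻¹ : Rˣ) : R)) * (b₂ * t) := fun t => by rw [← mul_assoc, m_b₂_yi, mul_assoc]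
  have m_c₂_x : c₂ * (algebraMap R A (q : R)) = (algebraMap R A (q : R)) * c₂ := (Algebra.commutes (q : R) c₂).symm
  have m_c₂_xT : ∀ t : A, c₂ * ((algebraMap R A (q : R)) * t) = (algebraMap R A (q : R)) * (c₂ * t) := fun t => by rw [← mul_assoc, m_c₂_x, mul_assoc]
  have m_c₂_xi : c₂ * (algebraMap R A ((q⁻¹ : Rˣ) : R)) = (algebraMap R A ((q⁻¹ : Rˣ) : R)) * c₂ := (Algebra.commutes ((q⁻¹ : Rˣ) : R) c₂).symm
  have m_c₂_xiT : ∀ t : A, c₂ * ((algebraMap R A ((q⁻¹ : Rˣ) : R)) * t) = (algebraMap R A ((q⁻¹ : Rˣ) : R)) * (c₂ * t) := fun t => by rw [← mul_assoc, m_c₂_xi, mul_assoc]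
  have m_c₂_y : c₂ * (algebraMap R A (r : R)) = (algebraMap R A (r : R)) * c₂ := (Algebra.commutes (r : R) c₂).symm
  have m_c₂_yT : ∀ t : A, c₂ * ((algebraMap R A (r : R)) * t) = (algebraMap R A (r : R)) * (c₂ * t) := fun t => by rw [← mul_assoc, m_c₂_y, mul_assoc]
  have m_c₂_yi : c₂ * (algebraMap R A ((r⁻¹ : Rˣ) : R)) = (algebraMap R A ((r⁻¹ : Rˣ) : R)) * c₂ := (Algebra.commutes ((r⁻¹ : Rˣ) : R) c₂).symm
  have m_c₂_yiT : ∀ t : A, c₂ * ((algebraMap R A ((r⁻¹ : Rˣ) : R)) * t) = (algebraMap R A ((r⁻¹ : Rˣ) : R)) * (c₂ * t) := fun t => by rw [← mul_assoc, m_c₂_yi, mul_assoc]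
  have m_d₂_x : d₂ * (algebraMap R A (q : R)) = (algebraMap R A (q : R)) * d₂ := (Algebra.commutes (q : R) d₂).symm
  have m_d₂_xT : ∀ t : A, d₂ * ((algebraMap R A (q : R)) * t) = (algebraMap R A (q : R)) * (d₂ * t) := fun t => by rw [← mul_assoc, m_d₂_x, mul_assoc]
  have m_d₂_xi : d₂ * (algebraMap R A ((q⁻¹ : Rˣ) : R)) = (algebraMap R A ((q⁻¹ : Rˣ) : R)) * d₂ := (Algebra.commutes ((q⁻¹ : Rˣ) : R) d₂).symm
  have m_d₂_xiT : ∀ t : A, d₂ * ((algebraMap R A ((q⁻¹ : Rˣ) : R)) * t) = (algebraMap R A ((q⁻¹ : Rˣ) : R)) * (d₂ * t) := fun t => by rw [← mul_assoc, m_d₂_xi, mul_assoc]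
  have m_d₂_y : d₂ * (algebraMap R A (r : R)) = (algebraMap R A (r : R)) * d₂ := (Algebra.commutes (r : R) d₂).symm
  have m_d₂_yT : ∀ t : A, d₂ * ((algebraMap R A (r : R)) * t) = (algebraMap R A (r : R)) * (d₂ * t) := fun t => by rw [← mul_assoc, m_d₂_y, mul_assoc]
  have m_d₂_yi : d₂ * (algebraMap R A ((r⁻¹ : Rˣ) : R)) = (algebraMap R A ((r⁻¹ : Rˣ) : R)) * d₂ := (Algebra.commutes ((r⁻¹ : Rˣ) : R) d₂).symm
  have m_d₂_yiT : ∀ t : A, d₂ * ((algebraMap R A ((r⁻¹ : Rˣ) : R)) * t) = (algebraMap R A ((r⁻¹ : Rˣ) : R)) * (d₂ * t) := fun t => by rw [← mul_assoc, m_d₂_yi, mul_assoc]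
  have c_a₂_a₁ : a₂ * a₁ = a₁ * a₂ := (hcomm a₁ (by simp) a₂ (by simp)).symm
  have c_a₂_a₁T : ∀ t : A, a₂ * (a₁ * t) = a₁ * (a₂ * t) := fun t => by rw [← mul_assoc, c_a₂_a₁, mul_assoc]
  have c_b₂_a₁ : b₂ * a₁ = a₁ * b₂ := (hcomm a₁ (by simp) b₂ (by simp)).symm
  have c_b₂_a₁T : ∀ t : A, b₂ * (a₁ * t) = a₁ * (b₂ * t) := fun t => by rw [← mul_assoc, c_b₂_a₁, mul_assoc]
  have c_c₂_a₁ : c₂ * a₁ = a₁ * c₂ := (hcomm a₁ (by simp) c₂ (by simp)).symm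
  have c_c₂_a₁T : ∀ t : A, c₂ * (a₁ * t) = a₁ * (c₂ * t) := fun t => by rw [← mul_assoc, c_c₂_a₁, mul_assoc]
  have c_d₂_a₁ : d₂ * a₁ = a₁ * d₂ := (hcomm a₁ (by simp) d₂ (by simp)).symm
  have c_d₂_a₁T : ∀ t : A, d₂ * (a₁ * t) = a₁ * (d₂ * t) := fun t => by rw [← mul_assoc, c_d₂_a₁, mul_assoc]
  have c_a₂_b₁ : a₂ * b₁ = b₁ * a₂ := (hcomm b₁ (by simp) a₂ (by simp)).symm
  have c_a₂_b₁T : ∀ t : A, a₂ * (b₁ * t) = b₁ * (a₂ * t) := fun t => by rw [← mul_assoc, c_a₂_b₁, mul_assoc]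
  have c_b₂_b₁ : b₂ * b₁ = b₁ * b₂ := (hcomm b₁ (by simp) b₂ (by simp)).symm
  have c_b₂_b₁T : ∀ t : A, b₂ * (b₁ * t) = b₁ * (b₂ * t) := fun t => by rw [← mul_assoc, c_b₂_b₁, mul_assoc]
  have c_c₂_b₁ : c₂ * b₁ = b₁ * c₂ := (hcomm b₁ (by simp) c₂ (by simp)).symm
  have c_c₂_b₁T : ∀ t : A, c₂ * (b₁ * t) = b₁ * (c₂ * t) := fun t => by rw [← mul_assoc, c_c₂_b₁, mul_assoc]
  have c_d₂_b₁ : d₂ * b₁ = b₁ * d₂ := (hcomm b₁ (by simp) d₂ (by simp)).symm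
  have c_d₂_b₁T : ∀ t : A, d₂ * (b₁ * t) = b₁ * (d₂ * t) := fun t => by rw [← mul_assoc, c_d₂_b₁, mul_assoc]
  have c_a₂_c₁ : a₂ * c₁ = c₁ * a₂ := (hcomm c₁ (by simp) a₂ (by simp)).symm
  have c_a₂_c₁T : ∀ t : A, a₂ * (c₁ * t) = c₁ * (a₂ * t) := fun t => by rw [← mul_assoc, c_a₂_c₁, mul_assoc]
  have c_b₂_c₁ : b₂ * c₁ = c₁ * b₂ := (hcomm c₁ (by simp) b₂ (by simp)).symm
  have c_b₂_c₁T : ∀ t : A, b₂ * (c₁ * t) = c₁ * (b₂ * t) := fun t => by rw [← mul_assoc, c_b₂_c₁, mul_assoc]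
  have c_c₂_c₁ : c₂ * c₁ = c₁ * c₂ := (hcomm c₁ (by simp) c₂ (by simp)).symm
  have c_c₂_c₁T : ∀ t : A, c₂ * (c₁ * t) = c₁ * (c₂ * t) := fun t => by rw [← mul_assoc, c_c₂_c₁, mul_assoc]
  have c_d₂_c₁ : d₂ * c₁ = c₁ * d₂ := (hcomm c₁ (by simp) d₂ (by simp)).symm
  have c_d₂_c₁T : ∀ t : A, d₂ * (c₁ * t) = c₁ * (d₂ * t) := fun t => by rw [← mul_assoc, c_d₂_c₁, mul_assoc]
  have c_a₂_d₁ : a₂ * d₁ = d₁ * a₂ := (hcomm d₁ (by simp) a₂ (by simp)).symm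
  have c_a₂_d₁T : ∀ t : A, a₂ * (d₁ * t) = d₁ * (a₂ * t) := fun t => by rw [← mul_assoc, c_a₂_d₁, mul_assoc]
  have c_b₂_d₁ : b₂ * d₁ = d₁ * b₂ := (hcomm d₁ (by simp) b₂ (by simp)).symm
  have c_b₂_d₁T : ∀ t : A, b₂ * (d₁ * t) = d₁ * (b₂ * t) := fun t => by rw [← mul_assoc, c_b₂_d₁, mul_assoc]
  have c_c₂_d₁ : c₂ * d₁ = d₁ * c₂ := (hcomm d₁ (by simp) c₂ (by simp)).symm
  have c_c₂_d₁T : ∀ t : A, c₂ * (d₁ * t) = d₁ * (c₂ * t) := fun t => by rw [← mul_assoc, c_c₂_d₁, mul_assoc]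
  have c_d₂_d₁ : d₂ * d₁ = d₁ * d₂ := (hcomm d₁ (by simp) d₂ (by simp)).symm
  have c_d₂_d₁T : ∀ t : A, d₂ * (d₁ * t) = d₁ * (d₂ * t) := fun t => by rw [← mul_assoc, c_d₂_d₁, mul_assoc]
  have t1ab : ∀ t : A, a₁ * (b₁ * t) = (algebraMap R A (r : R)) * (b₁ * (a₁ * t)) := by intro t; rw [← mul_assoc, h11]; noncomm_ring
  have t1ac : ∀ t : A, a₁ * (c₁ * t) = (algebraMap R A (r : R)) * (c₁ * (a₁ * t)) := by intro t; rw [← mul_assoc, h12]; noncomm_ring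
  have t1bc : ∀ t : A, b₁ * (c₁ * t) = c₁ * (b₁ * t) := by intro t; rw [← mul_assoc, h13]; noncomm_ring
  have t1bd : ∀ t : A, b₁ * (d₁ * t) = (algebraMap R A (r : R)) * (d₁ * (b₁ * t)) + (((algebraMap R A ((q⁻¹ : Rˣ) : R))^2 - 1) * ((algebraMap R A (r : R))^2 - 1)) * (b₁ * (a₁ * t)) := by intro t; rw [← mul_assoc, h14]; noncomm_ring
  have t1cd : ∀ t : A, c₁ * (d₁ * t) = (algebraMap R A (r : R)) * (d₁ * (c₁ * t)) + (((algebraMap R A ((q⁻¹ : Rˣ) : R))^2 - 1) * ((algebraMap R A (r : R))^2 - 1)) * (c₁ * (a₁ * t)) := by intro t; rw [← mul_assoc, h15]; noncomm_ring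
  have t1da : ∀ t : A, d₁ * (a₁ * t) = (algebraMap R A ((q⁻¹ : Rˣ) : R))^2 * t - ((algebraMap R A ((q⁻¹ : Rˣ) : R))^2 * (1 - (algebraMap R A (q : R))^2)) * (a₁ * (a₁ * t)) + ((algebraMap R A ((q⁻¹ : Rˣ) : R))^2 * ((algebraMap R A ((r⁻¹ : Rˣ) : R)) * (algebraMap R A (q : R))^4)) * (c₁ * (b₁ * t)) := by intro t; rw [← mul_assoc, hda1]; noncomm_ring
  have t1ad : ∀ t : A, a₁ * (d₁ * t) = d₁ * (a₁ * t) + (((algebraMap R A (r : R)) - (algebraMap R A ((r⁻¹ : Rˣ) : R))) * (algebraMap R A (q : R))^2) * (b₁ * (c₁ * t)) := by intro t; rw [← mul_assoc, had1]; noncomm_ring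
  have t2ab : ∀ t : A, a₂ * (b₂ * t) = (algebraMap R A (r : R)) * (b₂ * (a₂ * t)) := by intro t; rw [← mul_assoc, h21]; noncomm_ring
  have t2ac : ∀ t : A, a₂ * (c₂ * t) = (algebraMap R A (r : R)) * (c₂ * (a₂ * t)) := by intro t; rw [← mul_assoc, h22]; noncomm_ring
  have t2bc : ∀ t : A, b₂ * (c₂ * t) = c₂ * (b₂ * t) := by intro t; rw [← mul_assoc, h23]; noncomm_ring
  have t2bd : ∀ t : A, b₂ * (d₂ * t) = (algebraMap R A (r : R)) * (d₂ * (b₂ * t)) + (((algebraMap R A ((q⁻¹ : Rˣ) : R))^2 - 1) * ((algebraMap R A (r : R))^2 - 1)) * (b₂ * (a₂ * t)) := by intro t; rw [← mul_assoc, h24]; noncomm_ring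
  have t2cd : ∀ t : A, c₂ * (d₂ * t) = (algebraMap R A (r : R)) * (d₂ * (c₂ * t)) + (((algebraMap R A ((q⁻¹ : Rˣ) : R))^2 - 1) * ((algebraMap R A (r : R))^2 - 1)) * (c₂ * (a₂ * t)) := by intro t; rw [← mul_assoc, h25]; noncomm_ring
  have t2da : ∀ t : A, d₂ * (a₂ * t) = (algebraMap R A ((q⁻¹ : Rˣ) : R))^2 * t - ((algebraMap R A ((q⁻¹ : Rˣ) : R))^2 * (1 - (algebraMap R A (q : R))^2)) * (a₂ * (a₂ * t)) + ((algebraMap R A ((q⁻¹ : Rˣ) : R))^2 * ((algebraMap R A ((r⁻¹ : Rˣ) : R)) * (algebraMap R A (q : R))^4)) * (c₂ * (b₂ * t)) := by intro t; rw [← mul_assoc, hda2]; noncomm_ring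
  have t2ad : ∀ t : A, a₂ * (d₂ * t) = d₂ * (a₂ * t) + (((algebraMap R A (r : R)) - (algebraMap R A ((r⁻¹ : Rˣ) : R))) * (algebraMap R A (q : R))^2) * (b₂ * (c₂ * t)) := by intro t; rw [← mul_assoc, had2]; noncomm_ring
  refine ⟨?_, ?_, ?_, ?_, ?_, ?_, ?_⟩ <;>
    · simp only [mul_assoc, mul_add, add_mul, mul_sub, sub_mul, mul_one, one_mul, neg_mul, mul_neg, hp2, hp4, hp2, hp4, k_x_xi, k_x_xiT, k_xi_x, k_xi_xT, k_y_yi, k_y_yiT, k_yi_y, k_yi_yT, o_y_x, o_y_xT, o_y_xi, o_y_xiT, o_yi_x, o_yi_xT, o_yi_xi, o_yi_xiT, m_a₁_x, m_a₁_xT, m_a₁_xi, m_a₁_xiT, m_a₁_y, m_a₁_yT, m_a₁_yi, m_a₁_yiT, m_b₁_x, m_b₁_xT, m_b₁_xi, m_b₁_xiT, m_b₁_y, m_b₁_yT, m_b₁_yi, m_b₁_yiT, m_c₁_x, m_c₁_xT, m_c₁_xi, m_c₁_xiT, m_c₁_y, m_c₁_yT, m_c₁_yi, m_c₁_yiT,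 m_d₁_x, m_d₁_xT, m_d₁_xi, m_d₁_xiT, m_d₁_y, m_d₁_yT, m_d₁_yi, m_d₁_yiT, m_a₂_x, m_a₂_xT, m_a₂_xi, m_a₂_xiT, m_a₂_y, m_a₂_yT, m_a₂_yi, m_a₂_yiT, m_b₂_x, m_b₂_xT, m_b₂_xi, m_b₂_xiT, m_b₂_y, m_b₂_yT, m_b₂_yi, m_b₂_yiT, m_c₂_x, m_c₂_xT, m_c₂_xi, m_c₂_xiT, m_c₂_y, m_c₂_yT, m_c₂_yi, m_c₂_yiT, m_d₂_x, m_d₂_xT, m_d₂_xi, m_d₂_xiT, m_d₂_y, m_d₂_yT, m_d₂_yi, m_d₂_yiT, c_a₂_a₁, c_a₂_a₁T, c_b₂_a₁, c_b₂_a₁T, c_c₂_a₁, c_c₂_a₁T, c_d₂_a₁, c_d₂_a₁T, c_a₂_b₁, c_a₂_b₁T, c_b₂_b₁, c_b₂_b₁T, c_c₂_b₁, c_c₂_b₁T, c_d₂_b₁, c_d₂_b₁T, c_a₂_c₁, c_a₂_c₁T, c_b₂_c₁, c_b₂_c₁T, c_c₂_c₁, c_c₂_c₁T, c_d₂_c₁,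 c_d₂_c₁T, c_a₂_d₁, c_a₂_d₁T, c_b₂_d₁, c_b₂_d₁T, c_c₂_d₁, c_c₂_d₁T, c_d₂_d₁, c_d₂_d₁T, h11, h12, h13, h14, h15, h21, h22, h23, h24, h25, hda1, had1, hda2, had2, t1ab, t1ac, t1bc, t1bd, t1cd, t1da, t1ad, t2ab, t2ac, t2bc, t2bd, t2cd, t2da, t2ad]
      abel
end

section
/- Let R be a commutative ring with invertible elements q and r, and let A be an associative unital R-algebra containing a, b, c, d satisfying the two-parameter (q,r)-deformed relations. Define Δ(a) = a⊗a + q⁴·c⊗b, Δ(b) = (1−q²)·a⊗b + b⊗a + q²·d⊗b, Δ(c) = (1−q²)·c⊗a + a⊗c + q²·c⊗d, Δ(d) = (q²−1)·a⊗a + (q⁴−q²)·c⊗b + q²·b⊗c + (1−q²)·a⊗d + (1−q²)·d⊗a + q²·d⊗d, counit values ε(a) = ε(d) = 1, ε(b) = ε(c) = 0, and antipode values S(a) = (1−q²)·a + q²·d, S(b) = −r·b, S(c) = −r⁻¹·c, S(d) = (2−q²)·a + (q²−1)·d. Then for each x ∈ {a,b,c,d}, writing Δ(x) = Σ u⊗v,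 one has Σ S(u)·v = ε(x)·1 and Σ u·S(v) = ε(x)·1 in A. -/
/-- For `a, b, c, d` satisfying the two-parameter `(q,r)`-deformed
relations in an associative unital `R`-algebra, the second-solution coproduct,
counit values `ε(a) = ε(d) = 1`, `ε(b) = ε(c) = 0`, and antipode values
`S(a) = (1−q²) a + q² d`, `S(b) = −r b`, `S(c) = −r⁻¹ c`,
`S(d) = (2−q²) a + (q²−1) d` satisfy the antipode identities
`Σ S(u)·v = ε(x)·1 = Σ u·S(v)` on each generator. -/
theorem two_param_antipode {R : Type*} [CommRing R] {A : Type*} [Ring A] [Algebra R A]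
    (q r : Rˣ) (a b c d : A)
    (h1 : a * b = (r : R) • (b * a))
    (h2 : a * c = (r : R) • (c * a))
    (h3 : b * c = c * b)
    (h4 : b * d = (r : R) • (d * b)
      + ((((q⁻¹ : Rˣ) : R) ^ 2 - 1) * ((r : R) ^ 2 - 1)) • (b * a))
    (h5 : c * d = (r : R) • (d * c)
      + ((((q⁻¹ : Rˣ) : R) ^ 2 - 1) * ((r : R) ^ 2 - 1)) • (c * a))
    (h6 : a * d - d * a = (((r : R) - ((r⁻¹ : Rˣ) : R)) * (q : R) ^ 2) • (b * c))
    (h7 : ((q : R) ^ 2) • (d * a) + ((1 : R) - (q : R) ^ 2) • (a * a)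
      - (((r⁻¹ : Rˣ) : R) * (q : R) ^ 4) • (c * b) = 1) :
    let Q : R := (q : R)
    let Sa : A := ((1 : R) - Q ^ 2) • a + Q ^ 2 • d
    let Sb : A := (-(r : R)) • b
    let Sc : A := (-((r⁻¹ : Rˣ) : R)) • c
    let Sd : A := ((2 : R) - Q ^ 2) • a + (Q ^ 2 - 1) • d
    -- Δ(a) = a⊗a + q⁴ c⊗b, ε(a) = 1
    (Sa * a + Q ^ 4 • (Sc * b) = 1) ∧
    (a * Sa + Q ^ 4 • (c * Sb) = 1) ∧
    -- Δ(b) = (1−q²) a⊗b + b⊗a + q² d⊗b, ε(b) = 0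
    (((1 : R) - Q ^ 2) • (Sa * b) + Sb * a + Q ^ 2 • (Sd * b) = 0) ∧
    (((1 : R) - Q ^ 2) • (a * Sb) + b * Sa + Q ^ 2 • (d * Sb) = 0) ∧
    -- Δ(c) = (1−q²) c⊗a + a⊗c + q² c⊗d, ε(c) = 0
    (((1 : R) - Q ^ 2) • (Sc * a) + Sa * c + Q ^ 2 • (Sc * d) = 0) ∧
    (((1 : R) - Q ^ 2) • (c * Sa) + a * Sc + Q ^ 2 • (c * Sd) = 0) ∧
    -- Δ(d) = (q²−1) a⊗a + (q⁴−q²) c⊗b + q² b⊗c + (1−q²) a⊗d + (1−q²) d⊗a + q² d⊗d, ε(d) = 1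
    ((Q ^ 2 - 1) • (Sa * a) + (Q ^ 4 - Q ^ 2) • (Sc * b) + Q ^ 2 • (Sb * c)
      + ((1 : R) - Q ^ 2) • (Sa * d) + ((1 : R) - Q ^ 2) • (Sd * a) + Q ^ 2 • (Sd * d) = 1) ∧
    ((Q ^ 2 - 1) • (a * Sa) + (Q ^ 4 - Q ^ 2) • (c * Sb) + Q ^ 2 • (b * Sc)
      + ((1 : R) - Q ^ 2) • (a * Sd) + ((1 : R) - Q ^ 2) • (d * Sa) + Q ^ 2 • (d * Sd) = 1) := by
  have hq : ((q⁻¹ : Rˣ) : R) * (q : R) = 1 := q.inv_mul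
  have hr : ((r⁻¹ : Rˣ) : R) * (r : R) = 1 := r.inv_mul
  have had : a * d = d * a + (((r : R) - ((r⁻¹ : Rˣ) : R)) * (q : R) ^ 2) • (c * b) := by
    have := sub_eq_iff_eq_add.mp h6
    rw [h3] at this
    rw [this, add_comm]
  intro Q Sa Sb Sc Sd
  refine ⟨?_, ?_, ?_, ?_, ?_, ?_, ?_, ?_⟩
  · show (((1 : R) - Q ^ 2) • a + Q ^ 2 • d) * a
      + Q ^ 4 • (((-((r⁻¹ : Rˣ) : R)) • c) * b) = 1
    rw [← h7]
    simp only [neg_smul, smul_add, smul_smul, smul_mul_assoc, mul_smul_comm, add_mul, mul_add,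
      smul_neg, neg_mul, mul_neg]
    match_scalars <;> ring
  · show a * (((1 : R) - Q ^ 2) • a + Q ^ 2 • d)
      + Q ^ 4 • (c * ((-(r : R)) • b)) = 1
    rw [← h7]
    simp only [neg_smul, smul_add, smul_smul, smul_mul_assoc, mul_smul_comm, add_mul, mul_add,
      smul_neg, neg_mul, mul_neg]
    rw [had]
    match_scalars <;> ring
  · show ((1 : R) - Q ^ 2) • ((((1 : R) - Q ^ 2) • a + Q ^ 2 • d) * b)
      + ((-(r : R)) • b) * a
      + Q ^ 2 • ((((2 : R) - Q ^ 2) • a + (Q ^ 2 - 1) • d) * b) = 0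
    simp only [neg_smul, smul_add, smul_smul, smul_mul_assoc, mul_smul_comm, add_mul, mul_add,
      smul_neg, neg_mul, mul_neg]
    rw [h1]
    match_scalars <;> ring
  · show ((1 : R) - Q ^ 2) • (a * ((-(r : R)) • b))
      + b * (((1 : R) - Q ^ 2) • a + Q ^ 2 • d)
      + Q ^ 2 • (d * ((-(r : R)) • b)) = 0
    simp only [neg_smul, smul_add, smul_smul, smul_mul_assoc, mul_smul_comm, add_mul, mul_add,
      smul_neg, neg_mul, mul_neg]
    rw [h1, h4]
    match_scalars <;>
      first
        | ring1
        | linear_combination (((r : R) ^ 2 - 1) * (((q⁻¹ : Rˣ) : R) * (q : R) + 1)) * hq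
  · show ((1 : R) - Q ^ 2) • (((-((r⁻¹ : Rˣ) : R)) • c) * a)
      + (((1 : R) - Q ^ 2) • a + Q ^ 2 • d) * c
      + Q ^ 2 • (((-((r⁻¹ : Rˣ) : R)) • c) * d) = 0
    simp only [neg_smul, smul_add, smul_smul, smul_mul_assoc, mul_smul_comm, add_mul, mul_add,
      smul_neg, neg_mul, mul_neg]
    rw [h2, h5]
    match_scalars <;>
      first
        | ring1
        | linear_combination (-(r : R) * (1 - (q : R) ^ 2)) * hr
            + (-((r⁻¹ : Rˣ) : R) * ((r : R) ^ 2 - 1) * (((q⁻¹ : Rˣ) : R) * (q : R) + 1)) * hq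
        | linear_combination (-((q : R) ^ 2)) * hr
  · show ((1 : R) - Q ^ 2) • (c * (((1 : R) - Q ^ 2) • a + Q ^ 2 • d))
      + a * ((-((r⁻¹ : Rˣ) : R)) • c)
      + Q ^ 2 • (c * (((2 : R) - Q ^ 2) • a + (Q ^ 2 - 1) • d)) = 0
    simp only [neg_smul, smul_add, smul_smul, smul_mul_assoc, mul_smul_comm, add_mul, mul_add,
      smul_neg, neg_mul, mul_neg]
    rw [h2, h5]
    match_scalars <;>
      first
        | ring1
        | linear_combination -hr
  · show (Q ^ 2 - 1) • ((((1 : R) - Q ^ 2) • a + Q ^ 2 • d) * a)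
      + (Q ^ 4 - Q ^ 2) • (((-((r⁻¹ : Rˣ) : R)) • c) * b)
      + Q ^ 2 • (((-(r : R)) • b) * c)
      + ((1 : R) - Q ^ 2) • ((((1 : R) - Q ^ 2) • a + Q ^ 2 • d) * d)
      + ((1 : R) - Q ^ 2) • ((((2 : R) - Q ^ 2) • a + (Q ^ 2 - 1) • d) * a)
      + Q ^ 2 • ((((2 : R) - Q ^ 2) • a + (Q ^ 2 - 1) • d) * d) = 1
    rw [← h7]
    simp only [neg_smul, smul_add, smul_smul, smul_mul_assoc, mul_smul_comm, add_mul, mul_add,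
      smul_neg, neg_mul, mul_neg]
    rw [h3, had]
    match_scalars <;> ring
  · show (Q ^ 2 - 1) • (a * (((1 : R) - Q ^ 2) • a + Q ^ 2 • d))
      + (Q ^ 4 - Q ^ 2) • (c * ((-(r : R)) • b))
      + Q ^ 2 • (b * ((-((r⁻¹ : Rˣ) : R)) • c))
      + ((1 : R) - Q ^ 2) • (a * (((2 : R) - Q ^ 2) • a + (Q ^ 2 - 1) • d))
      + ((1 : R) - Q ^ 2) • (d * (((1 : R) - Q ^ 2) • a + Q ^ 2 • d))
      + Q ^ 2 • (d * (((2 : R) - Q ^ 2) • a + (Q ^ 2 - 1) • d)) = 1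
    rw [← h7]
    simp only [neg_smul, smul_add, smul_smul, smul_mul_assoc, mul_smul_comm, add_mul, mul_add,
      smul_neg, neg_mul, mul_neg]
    rw [h3, had]
    match_scalars <;> ring
end

section
/- Let R be a commutative ring with invertible elements q and r, and let A be an associative unital R-algebra containing a, b, c, d satisfying the two-parameter (q,r)-deformed relations. Define S(a) = (1−q²)·a + q²·d, S(b) = −r·b, S(c) = −r⁻¹·c, S(d) = (2−q²)·a + (q²−1)·d. Then these elements satisfy the relations with all products reversed: S(b)·S(a) = r·S(a)·S(b), S(c)·S(a) = r·S(a)·S(c), S(c)·S(b) = S(b)·S(c), S(d)·S(b) = r·S(b)·S(d) + (q⁻² − 1)(r² − 1)·S(a)·S(b), S(d)·S(c) = r·S(c)·S(d) + (q⁻² − 1)(r² − 1)·S(a)·S(c), S(d)·S(a) − S(a)·S(d) = (r − r⁻¹)q²·S(c)·S(b), and q²·S(a)·S(d) + (1 − q²)·S(a)·S(a) − r⁻¹q⁴·S(b)·S(c) = 1. -/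
/-- For `a, b, c, d` satisfying the two-parameter `(q,r)`-deformed
relations, the antipode images `S(a) = (1−q²) a + q² d`, `S(b) = −r b`,
`S(c) = −r⁻¹ c`, `S(d) = (2−q²) a + (q²−1) d` satisfy the relations with all
products reversed. -/
theorem two_param_antipode_antihom {R : Type*} [CommRing R] {A : Type*} [Ring A] [Algebra R A]
    (q r : Rˣ) (a b c d : A)
    (h1 : a * b = (r : R) • (b * a))
    (h2 : a * c = (r : R) • (c * a))
    (h3 : b * c = c * b)
    (h4 : b * d = (r : R) • (d * b)
      + ((((q⁻¹ : Rˣ) : R) ^ 2 - 1) * ((r : R) ^ 2 - 1)) • (b * a))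
    (h5 : c * d = (r : R) • (d * c)
      + ((((q⁻¹ : Rˣ) : R) ^ 2 - 1) * ((r : R) ^ 2 - 1)) • (c * a))
    (h6 : a * d - d * a = (((r : R) - ((r⁻¹ : Rˣ) : R)) * (q : R) ^ 2) • (b * c))
    (h7 : ((q : R) ^ 2) • (d * a) + ((1 : R) - (q : R) ^ 2) • (a * a)
      - (((r⁻¹ : Rˣ) : R) * (q : R) ^ 4) • (c * b) = 1) :
    let Q : R := (q : R)
    let Sa : A := ((1 : R) - Q ^ 2) • a + Q ^ 2 • d
    let Sb : A := (-(r : R)) • b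
    let Sc : A := (-((r⁻¹ : Rˣ) : R)) • c
    let Sd : A := ((2 : R) - Q ^ 2) • a + (Q ^ 2 - 1) • d
    (Sb * Sa = (r : R) • (Sa * Sb)) ∧
    (Sc * Sa = (r : R) • (Sa * Sc)) ∧
    (Sc * Sb = Sb * Sc) ∧
    (Sd * Sb = (r : R) • (Sb * Sd)
      + ((((q⁻¹ : Rˣ) : R) ^ 2 - 1) * ((r : R) ^ 2 - 1)) • (Sa * Sb)) ∧
    (Sd * Sc = (r : R) • (Sc * Sd)
      + ((((q⁻¹ : Rˣ) : R) ^ 2 - 1) * ((r : R) ^ 2 - 1)) • (Sa * Sc)) ∧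
    (Sd * Sa - Sa * Sd = (((r : R) - ((r⁻¹ : Rˣ) : R)) * (q : R) ^ 2) • (Sc * Sb)) ∧
    (((q : R) ^ 2) • (Sa * Sd) + ((1 : R) - (q : R) ^ 2) • (Sa * Sa)
      - (((r⁻¹ : Rˣ) : R) * (q : R) ^ 4) • (Sb * Sc) = 1) := by
  intro Q Sa Sb Sc Sd
  have hq : (q : R) * ((q⁻¹ : Rˣ) : R) = 1 := by exact_mod_cast q.mul_inv
  have hr : (r : R) * ((r⁻¹ : Rˣ) : R) = 1 := by exact_mod_cast r.mul_inv
  have had : a * d = d * a + (((r : R) - ((r⁻¹ : Rˣ) : R)) * (q : R) ^ 2) • (c * b) := by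
    rw [← h3, ← h6]; abel
  refine ⟨?_, ?_, ?_, ?_, ?_, ?_, ?_⟩
  · simp only [Q, Sa, Sb, smul_add, add_mul, mul_add, smul_mul_assoc, mul_smul_comm, smul_smul]
    rw [h1, h4]
    simp only [smul_add, smul_smul]
    match_scalars <;> (first | ring1 | linear_combination ((r:R) * (1 - (r:R)^2) * ((q:R) * ((q⁻¹:Rˣ):R) + 1)) * hq)
  · simp only [Q, Sa, Sc, smul_add, add_mul, mul_add, smul_mul_assoc, mul_smul_comm, smul_smul]
    rw [h2, h5]
    simp only [smul_add, smul_smul]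
    match_scalars <;> (first | ring1 | linear_combination (((r⁻¹:Rˣ):R) * (1 - (r:R)^2) * ((q:R) * ((q⁻¹:Rˣ):R) + 1)) * hq)
  · simp only [Sb, Sc, smul_mul_assoc, mul_smul_comm, smul_smul]
    rw [h3]
    match_scalars
    ring
  · simp only [Q, Sa, Sb, Sd, smul_add, add_mul, mul_add, smul_mul_assoc, mul_smul_comm, smul_smul]
    rw [h1, h4]
    simp only [smul_add, smul_smul]
    match_scalars <;> (first | ring1 | linear_combination (((r:R)^3 - (r:R)) * ((q:R) * ((q⁻¹:Rˣ):R) + 1)) * hq)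
  · simp only [Q, Sa, Sc, Sd, smul_add, add_mul, mul_add, smul_mul_assoc, mul_smul_comm, smul_smul]
    rw [h2, h5]
    simp only [smul_add, smul_smul]
    match_scalars <;> (first | ring1 | linear_combination (((r⁻¹:Rˣ):R) * ((r:R)^2 - 1) * ((q:R) * ((q⁻¹:Rˣ):R) + 1)) * hq)
  · simp only [Q, Sa, Sb, Sc, Sd, smul_add, add_mul, mul_add, smul_mul_assoc, mul_smul_comm, smul_smul]
    rw [had]
    simp only [smul_add, smul_smul]
    match_scalars <;> (first | ring1 | linear_combination (-(q:R)^2 * ((r:R) - ((r⁻¹:Rˣ):R))) * hr)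
  · simp only [Q, Sa, Sb, Sc, Sd, smul_add, add_mul, mul_add, smul_mul_assoc, mul_smul_comm, smul_smul]
    rw [had, h3, ← h7]
    simp only [smul_add, smul_smul]
    match_scalars <;> (first | ring1 | linear_combination (-(q:R)^4 * ((r⁻¹:Rˣ):R)) * hr)
end

section
/- Let R be a commutative ring with invertible elements q and r, and let A be an associative unital R-algebra containing a, b, c, d satisfying the two-parameter (q,r)-deformed relations. Define the star assignment a* = (1−q²)·a + q²·d, b* = −r⁻¹·c, c* = −r·b, d* = (2−q²)·a + (q²−1)·d, and extend it R-linearly to the span of a,b,c,d. Then: (i) the star assignment is involutive on generators, i.e. (a*)* = a, (b*)* = b, (c*)* = c, (d*)* = d (where on the right-hand sides the linear extension is applied); (ii) the starred elements satisfy the relations with all products reversed, e.g. b*·a* = r·a*·b*, c*·a* = r·a*·c*, c*·b* = b*·c*, d*·b* = r·b*·d* + (q⁻² − 1)(r² − 1)·a*·b*, d*·c* = r·c*·d* + (q⁻² − 1)(r² − 1)·a*·c*, d*·a* − a*·d* = (r − r⁻¹)q²·c*·b*, and q²·a*·d* + (1 − q²)·a*·a* − r⁻¹q⁴·b*·c*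 = 1. -/
/-- For `a, b, c, d` satisfying the two-parameter `(q,r)`-deformed
relations, the star assignment `a* = (1−q²) a + q² d`, `b* = −r⁻¹ c`,
`c* = −r b`, `d* = (2−q²) a + (q²−1) d` (extended `R`-linearly to the span of
the generators) is involutive on the generators, and the starred elements
satisfy the relations with all products reversed. -/
theorem two_param_star_structure {R : Type*} [CommRing R] {A : Type*} [Ring A] [Algebra R A]
    (q r : Rˣ) (a b c d : A)
    (h1 : a * b = (r : R) • (b * a))
    (h2 : a * c = (r : R) • (c * a))
    (h3 : b * c = c * b)
    (h4 : b * d = (r : R) • (d * b)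
      + ((((q⁻¹ : Rˣ) : R) ^ 2 - 1) * ((r : R) ^ 2 - 1)) • (b * a))
    (h5 : c * d = (r : R) • (d * c)
      + ((((q⁻¹ : Rˣ) : R) ^ 2 - 1) * ((r : R) ^ 2 - 1)) • (c * a))
    (h6 : a * d - d * a = (((r : R) - ((r⁻¹ : Rˣ) : R)) * (q : R) ^ 2) • (b * c))
    (h7 : ((q : R) ^ 2) • (d * a) + ((1 : R) - (q : R) ^ 2) • (a * a)
      - (((r⁻¹ : Rˣ) : R) * (q : R) ^ 4) • (c * b) = 1) :
    let Q : R := (q : R)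
    let sa : A := ((1 : R) - Q ^ 2) • a + Q ^ 2 • d
    let sb : A := (-((r⁻¹ : Rˣ) : R)) • c
    let sc : A := (-(r : R)) • b
    let sd : A := ((2 : R) - Q ^ 2) • a + (Q ^ 2 - 1) • d
    -- (i) involutivity on generators: (x*)* = x, applying the R-linear extension
    (((1 : R) - Q ^ 2) • sa + Q ^ 2 • sd = a) ∧
    ((-((r⁻¹ : Rˣ) : R)) • sc = b) ∧
    ((-(r : R)) • sb = c) ∧
    (((2 : R) - Q ^ 2) • sa + (Q ^ 2 - 1) • sd = d) ∧
    -- (ii) starred elements satisfy the relations with products reversed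
    (sb * sa = (r : R) • (sa * sb)) ∧
    (sc * sa = (r : R) • (sa * sc)) ∧
    (sc * sb = sb * sc) ∧
    (sd * sb = (r : R) • (sb * sd)
      + ((((q⁻¹ : Rˣ) : R) ^ 2 - 1) * ((r : R) ^ 2 - 1)) • (sa * sb)) ∧
    (sd * sc = (r : R) • (sc * sd)
      + ((((q⁻¹ : Rˣ) : R) ^ 2 - 1) * ((r : R) ^ 2 - 1)) • (sa * sc)) ∧
    (sd * sa - sa * sd = (((r : R) - ((r⁻¹ : Rˣ) : R)) * (q : R) ^ 2) • (sc * sb)) ∧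
    (((q : R) ^ 2) • (sa * sd) + ((1 : R) - (q : R) ^ 2) • (sa * sa)
      - (((r⁻¹ : Rˣ) : R) * (q : R) ^ 4) • (sb * sc) = 1) := by

  have hq : (q : R) * ((q⁻¹ : Rˣ) : R) = 1 := Units.mul_inv q
  have hr : (r : R) * ((r⁻¹ : Rˣ) : R) = 1 := Units.mul_inv r
  have h6' : a * d = d * a + (((r : R) - ((r⁻¹ : Rˣ) : R)) * (q : R) ^ 2) • (b * c) := by
    rw [← h6]; abel
  intro Q sa sb sc sd
  refine ⟨?_, ?_, ?_, ?_, ?_, ?_, ?_, ?_, ?_, ?_, ?_⟩ <;>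
    simp only [Q, sa, sb, sc, sd] <;>
    try rw [← h7]
  all_goals
    simp only [smul_mul_assoc, mul_smul_comm, add_mul, mul_add, smul_add, smul_smul,
      h6', h1, h2, h4, h5, h3]
  all_goals match_scalars
  all_goals try ring
  all_goals try linear_combination hr
  all_goals try linear_combination (((q:R) * ((q⁻¹:Rˣ):R) + 1) * ((r⁻¹:Rˣ):R) * (1 - (r:R) ^ 2)) * hq
  all_goals try linear_combination (((q:R) * ((q⁻¹:Rˣ):R) + 1) * ((r:R) - (r:R) ^ 3)) * hq
  all_goals try linear_combination (-(((q:R) * ((q⁻¹:Rˣ):R) + 1) * ((r:R) - (r:R) ^ 3))) * hq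
  all_goals try linear_combination (-((q:R) ^ 2 * ((r:R) - ((r⁻¹:Rˣ):R)))) * hr
  all_goals try linear_combination (-((q:R) ^ 4 * ((r⁻¹:Rˣ):R))) * hr
  all_goals linear_combination (((q:R) * ((q⁻¹:Rˣ):R) + 1) * ((r⁻¹:Rˣ):R) * ((r:R) ^ 2 - 1)) * hq
end

section
/- Let R be a commutative ring, q ∈ R invertible, and A an associative unital R-algebra containing a, b, c, d satisfying the quantum SL_q(2) relations. Define the transmuted products a∘a = a·a, a∘b = a·b, a∘c = q·c·a, a∘d = a·d + (q−q⁻¹)·c·b, b∘a = q²·a·b, b∘b = q·b·b, b∘c = q⁻¹·b·c + (1−q⁻²)·(d−a)·a, b∘d = q·b·d − (1−q⁻²)·a·b, c∘a = q⁻¹·c·a, c∘b = q⁻¹·c·b, c∘c = q·c·c, c∘d = q·c·d, d∘a = d·a, d∘b = d·b, d∘c = d·c − q⁻¹(1−q⁻²)·c·a, d∘d = d·d − q⁻¹(1−q⁻²)·c·b. Then the braided SL_q(2) relations hold for the transmuted products: b∘a = q²·(a∘b), c∘a = q⁻²·(a∘c), a∘d = d∘a, b∘c = c∘b + (1−q⁻²)·(a∘d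 − a∘a), d∘b = b∘d + (1−q⁻²)·(a∘b), c∘d = d∘c + (1−q⁻²)·(c∘a), and a∘d − q²·(c∘b) = 1. -/
/-- Transmutation of the quantum `SL_q(2)` algebra: if `a, b, c, d`
satisfy the quantum `SL_q(2)` relations, then the transmuted products `x∘y`
defined from the original products satisfy the braided `SL_q(2)` relations. -/
theorem quantum_transmutation {R : Type*} [CommRing R] {A : Type*} [Ring A] [Algebra R A]
    (q : Rˣ) (a b c d : A)
    (h1 : a * b = ((q⁻¹ : Rˣ) : R) • (b * a))
    (h2 : a * c = ((q⁻¹ : Rˣ) : R) • (c * a))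
    (h3 : b * d = ((q⁻¹ : Rˣ) : R) • (d * b))
    (h4 : c * d = ((q⁻¹ : Rˣ) : R) • (d * c))
    (h5 : b * c = c * b)
    (h6 : a * d - d * a = (((q⁻¹ : Rˣ) : R) - (q : R)) • (b * c))
    (h7 : a * d - ((q⁻¹ : Rˣ) : R) • (b * c) = 1) :
    let Q : R := (q : R)
    let Qi : R := ((q⁻¹ : Rˣ) : R)
    -- the transmuted products
    let aa : A := a * a
    let ab : A := a * b
    let ac : A := Q • (c * a)
    let ad : A := a * d + (Q - Qi) • (c * b)
    let ba : A := Q ^ 2 • (a * b)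
    let bb : A := Q • (b * b)
    let bc : A := Qi • (b * c) + ((1 : R) - Qi ^ 2) • ((d - a) * a)
    let bd : A := Q • (b * d) - ((1 : R) - Qi ^ 2) • (a * b)
    let ca : A := Qi • (c * a)
    let cb : A := Qi • (c * b)
    let cc : A := Q • (c * c)
    let cd : A := Q • (c * d)
    let da : A := d * a
    let db : A := d * b
    let dc : A := d * c - (Qi * ((1 : R) - Qi ^ 2)) • (c * a)
    let dd : A := d * d - (Qi * ((1 : R) - Qi ^ 2)) • (c * b)
    -- the braided SL_q(2) relations for the transmuted products
    (ba = Q ^ 2 • ab) ∧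
    (ca = Qi ^ 2 • ac) ∧
    (ad = da) ∧
    (bc = cb + ((1 : R) - Qi ^ 2) • (ad - aa)) ∧
    (db = bd + ((1 : R) - Qi ^ 2) • ab) ∧
    (cd = dc + ((1 : R) - Qi ^ 2) • ca) ∧
    (ad - Q ^ 2 • cb = 1) := by
  intro Q Qi aa ab ac ad ba bb bc bd ca cb cc cd da db dc dd
  have hq : Q * Qi = 1 := by
    simpa [Q, Qi] using congrArg (Units.val) (q.mul_inv)
  have had : a * d = d * a + (Qi - Q) • (c * b) := by
    rw [← h5, ← h6]; abel
  refine ⟨rfl, ?_, ?_, ?_, ?_, ?_, ?_⟩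
  · show Qi • (c * a) = Qi ^ 2 • (Q • (c * a))
    match_scalars
    all_goals first
      | ring1
      | linear_combination hq
      | linear_combination -hq
      | linear_combination Q * hq
      | linear_combination -Q * hq
      | linear_combination Qi * hq
      | linear_combination -Qi * hq
      | linear_combination (2 * Qi : R) * hq
      | linear_combination (-2 * Qi : R) * hq
  · show a * d + (Q - Qi) • (c * b) = d * a
    rw [had]; module
  · show Qi • (b * c) + ((1 : R) - Qi ^ 2) • ((d - a) * a)
      = Qi • (c * b) + ((1 : R) - Qi ^ 2) • ((a * d + (Q - Qi) • (c * b)) - a * a)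
    rw [had, h5, sub_mul]
    match_scalars
    all_goals first
      | ring1
      | linear_combination hq
      | linear_combination -hq
      | linear_combination Q * hq
      | linear_combination -Q * hq
      | linear_combination Qi * hq
      | linear_combination -Qi * hq
      | linear_combination (2 * Qi : R) * hq
      | linear_combination (-2 * Qi : R) * hq
  · show d * b = (Q • (b * d) - ((1 : R) - Qi ^ 2) • (a * b)) + ((1 : R) - Qi ^ 2) • (a * b)
    rw [h3]
    match_scalars
    all_goals first
      | ring1
      | linear_combination hq
      | linear_combination -hq
      | linear_combination Q * hq
      | linear_combination -Q * hq
      | linear_combination Qi * hq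
      | linear_combination -Qi * hq
      | linear_combination (2 * Qi : R) * hq
      | linear_combination (-2 * Qi : R) * hq
  · show Q • (c * d) = (d * c - (Qi * ((1 : R) - Qi ^ 2)) • (c * a)) + ((1 : R) - Qi ^ 2) • (Qi • (c * a))
    rw [h4]
    match_scalars
    all_goals first
      | ring1
      | linear_combination hq
      | linear_combination -hq
      | linear_combination Q * hq
      | linear_combination -Q * hq
      | linear_combination Qi * hq
      | linear_combination -Qi * hq
      | linear_combination (2 * Qi : R) * hq
      | linear_combination (-2 * Qi : R) * hq
  · show (a * d + (Q - Qi) • (c * b)) - Q ^ 2 • (Qi • (c * b)) = 1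
    rw [← h7, had, h5]
    match_scalars
    all_goals first
      | ring1
      | linear_combination hq
      | linear_combination -hq
      | linear_combination Q * hq
      | linear_combination -Q * hq
      | linear_combination Qi * hq
      | linear_combination -Qi * hq
      | linear_combination (2 * Qi : R) * hq
      | linear_combination (-2 * Qi : R) * hq
end

section
/- Let R be a commutative ring, q ∈ R invertible, and A an associative unital R-algebra containing a, b, c, d satisfying the two-parameter (q,r)-deformed relations with r = q. Define the transmuted products a∘a = a·a, a∘b = q⁻¹·b·a, a∘c = a·c, a∘d = a·d + (q−q³)·b·c, b∘a = q·b·a, b∘b = q⁻¹·b·b, b∘c = q·b·c, b∘d = q⁻¹·b·d + q(1−q⁻²)²·b·a, c∘a = q⁻²·a·c, c∘b = q·c·b + (q⁻²−1)·(d−a)·a, c∘c = q⁻¹·c·c, c∘d = q⁻¹·c·d + (1−q⁻²)·a·c, d∘a = d·a, d∘b = d·b + (q⁻²−q⁻⁴)·a·b, d∘c = d·c, d∘d = d·d + (q−q⁻¹)·b·c. Then the braided SL_q(2) relations hold for the transmuted products: b∘a = q²·(a∘b), c∘a = q⁻²·(a∘c), a∘d = d∘a, b∘c = c∘b + (1−q⁻²)·(a∘d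 − a∘a), d∘b = b∘d + (1−q⁻²)·(a∘b), c∘d = d∘c + (1−q⁻²)·(c∘a), and a∘d − q²·(c∘b) = 1. -/
/-- Transmutation of the two-parameter deformed algebra at `r = q`:
if `a, b, c, d` satisfy the `(q,q)`-deformed relations, then the transmuted
products `x∘y` defined from the original products satisfy the braided
`SL_q(2)` relations. -/
theorem two_param_transmutation {R : Type*} [CommRing R] {A : Type*} [Ring A] [Algebra R A]
    (q : Rˣ) (a b c d : A)
    (h1 : a * b = (q : R) • (b * a))
    (h2 : a * c = (q : R) • (c * a))
    (h3 : b * c = c * b)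
    (h4 : b * d = (q : R) • (d * b)
      + ((((q⁻¹ : Rˣ) : R) ^ 2 - 1) * ((q : R) ^ 2 - 1)) • (b * a))
    (h5 : c * d = (q : R) • (d * c)
      + ((((q⁻¹ : Rˣ) : R) ^ 2 - 1) * ((q : R) ^ 2 - 1)) • (c * a))
    (h6 : a * d - d * a = (((q : R) - ((q⁻¹ : Rˣ) : R)) * (q : R) ^ 2) • (b * c))
    (h7 : ((q : R) ^ 2) • (d * a) + ((1 : R) - (q : R) ^ 2) • (a * a)
      - ((q : R) ^ 3) • (c * b) = 1) :
    let Q : R := (q : R)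
    let Qi : R := ((q⁻¹ : Rˣ) : R)
    -- the transmuted products
    let aa : A := a * a
    let ab : A := Qi • (b * a)
    let ac : A := a * c
    let ad : A := a * d + (Q - Q ^ 3) • (b * c)
    let ba : A := Q • (b * a)
    let bb : A := Qi • (b * b)
    let bc : A := Q • (b * c)
    let bd : A := Qi • (b * d) + (Q * ((1 : R) - Qi ^ 2) ^ 2) • (b * a)
    let ca : A := Qi ^ 2 • (a * c)
    let cb : A := Q • (c * b) + (Qi ^ 2 - 1) • ((d - a) * a)
    let cc : A := Qi • (c * c)
    let cd : A := Qi • (c * d) + ((1 : R) - Qi ^ 2) • (a * c)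
    let da : A := d * a
    let db : A := d * b + (Qi ^ 2 - Qi ^ 4) • (a * b)
    let dc : A := d * c
    let dd : A := d * d + (Q - Qi) • (b * c)
    -- the braided SL_q(2) relations for the transmuted products
    (ba = Q ^ 2 • ab) ∧
    (ca = Qi ^ 2 • ac) ∧
    (ad = da) ∧
    (bc = cb + ((1 : R) - Qi ^ 2) • (ad - aa)) ∧
    (db = bd + ((1 : R) - Qi ^ 2) • ab) ∧
    (cd = dc + ((1 : R) - Qi ^ 2) • ca) ∧
    (ad - Q ^ 2 • cb = 1) := by
  have hq : (q : R) * ((q⁻¹ : Rˣ) : R) = 1 := q.mul_inv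
  intro Q Qi aa ab ac ad ba bb bc bd ca cb cc cd da db dc dd
  have h6' : a * d = (((q : R) - ((q⁻¹ : Rˣ) : R)) * (q : R) ^ 2) • (b * c) + d * a :=
    sub_eq_iff_eq_add.mp h6
  refine ⟨?_, ?_, ?_, ?_, ?_, ?_, ?_⟩
  · show (q : R) • (b * a) = (q : R) ^ 2 • (((q⁻¹ : Rˣ) : R) • (b * a))
    rw [smul_smul]
    match_scalars
    linear_combination (-(q : R)) * hq
  · rfl
  · show a * d + ((q : R) - (q : R) ^ 3) • (b * c) = d * a
    rw [h6']
    match_scalars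
    · linear_combination (-(q : R)) * hq
    · ring
  · show (q : R) • (b * c) = ((q : R) • (c * b) + (((q⁻¹ : Rˣ) : R) ^ 2 - 1) • ((d - a) * a))
      + ((1 : R) - ((q⁻¹ : Rˣ) : R) ^ 2) • ((a * d + ((q : R) - (q : R) ^ 3) • (b * c)) - a * a)
    rw [h6', h3, sub_mul]
    match_scalars
    · linear_combination ((q : R) - (q : R) * ((q⁻¹ : Rˣ) : R) ^ 2) * hq
    · ring
    · ring
  · show d * b + (((q⁻¹ : Rˣ) : R) ^ 2 - ((q⁻¹ : Rˣ) : R) ^ 4) • (a * b)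
      = (((q⁻¹ : Rˣ) : R) • (b * d) + ((q : R) * ((1 : R) - ((q⁻¹ : Rˣ) : R) ^ 2) ^ 2) • (b * a))
      + ((1 : R) - ((q⁻¹ : Rˣ) : R) ^ 2) • (((q⁻¹ : Rˣ) : R) • (b * a))
    rw [h1, h4]
    match_scalars
    · linear_combination (-1 : R) * hq
    · linear_combination ((1 - ((q⁻¹ : Rˣ) : R) ^ 2) * (q : R) + 2 * ((q⁻¹ : Rˣ) : R)
        - 2 * ((q⁻¹ : Rˣ) : R) ^ 3) * hq
  · show ((q⁻¹ : Rˣ) : R) • (c * d) + ((1 : R) - ((q⁻¹ : Rˣ) : R) ^ 2) • (a * c)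
      = d * c + ((1 : R) - ((q⁻¹ : Rˣ) : R) ^ 2) • (((q⁻¹ : Rˣ) : R) ^ 2 • (a * c))
    rw [h5, h2]
    match_scalars
    · linear_combination hq
    · linear_combination ((((q⁻¹ : Rˣ) : R) ^ 2 - 1) * (q : R) + ((q⁻¹ : Rˣ) : R) ^ 3
        - ((q⁻¹ : Rˣ) : R)) * hq
  · show (a * d + ((q : R) - (q : R) ^ 3) • (b * c))
      - (q : R) ^ 2 • ((q : R) • (c * b) + (((q⁻¹ : Rˣ) : R) ^ 2 - 1) • ((d - a) * a)) = 1
    rw [← h7, h6', h3, sub_mul d a a, smul_sub]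
    match_scalars
    · linear_combination (-(q : R)) * hq
    · linear_combination (-((q : R) * ((q⁻¹ : Rˣ) : R) + 1)) * hq
    · linear_combination ((q : R) * ((q⁻¹ : Rˣ) : R) + 1) * hq
end

section
/- Let R be a commutative ring, q ∈ R invertible, and A an associative unital R-algebra containing two quadruples a₁,b₁,c₁,d₁ and a₂,b₂,c₂,d₂, each satisfying the braided SL_q(2) relations, and satisfying the braided-tensor-product exchange relations determined by the first-solution braiding: for all generators x, y ∈ {a,b,c,d}, x₂·y₁ = Σ u₁·v₂ whenever the first-solution braiding formula gives ψ(x⊗y) = Σ u⊗v (here x₂ means the copy of x in the second quadruple, y₁ the copy of y in the first, etc.). Set A' := a₁·a₂ + b₁·c₂, B' := a₁·b₂ + b₁·d₂, C' := c₁·a₂ + d₁·c₂, D' := c₁·b₂ + d₁·d₂. Then (A', B', C', D') satisfies the braided SL_q(2) relations. -/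
set_option maxHeartbeats 4000000


private lemma mul_rot {A : Type*} [Ring A] {x y z : A} (h : x * y = z) (w : A) :
    x * (y * w) = z * w := by rw [← mul_assoc, h]

/-- For two copies of the braided `SL_q(2)` algebra obeying the
braided-tensor-product exchange relations determined by the first-solution
braiding, the matrix coproduct quadruple again satisfies the braided
`SL_q(2)` relations. -/
theorem first_coproduct_braided_hom {R : Type*} [CommRing R] {A : Type*} [Ring A] [Algebra R A]
    (q : Rˣ) (a₁ b₁ c₁ d₁ a₂ b₂ c₂ d₂ : A)
    -- first quadruple satisfies the braided relations
    (h11 : b₁ * a₁ = ((q : R) ^ 2) • (a₁ * b₁))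
    (h12 : c₁ * a₁ = (((q⁻¹ : Rˣ) : R) ^ 2) • (a₁ * c₁))
    (h13 : a₁ * d₁ = d₁ * a₁)
    (h14 : b₁ * c₁ = c₁ * b₁ + ((1 : R) - ((q⁻¹ : Rˣ) : R) ^ 2) • (a₁ * (d₁ - a₁)))
    (h15 : d₁ * b₁ = b₁ * d₁ + ((1 : R) - ((q⁻¹ : Rˣ) : R) ^ 2) • (a₁ * b₁))
    (h16 : c₁ * d₁ = d₁ * c₁ + ((1 : R) - ((q⁻¹ : Rˣ) : R) ^ 2) • (c₁ * a₁))
    (h17 : a₁ * d₁ - ((q : R) ^ 2) • (c₁ * b₁) = 1)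
    -- second quadruple satisfies the braided relations
    (h21 : b₂ * a₂ = ((q : R) ^ 2) • (a₂ * b₂))
    (h22 : c₂ * a₂ = (((q⁻¹ : Rˣ) : R) ^ 2) • (a₂ * c₂))
    (h23 : a₂ * d₂ = d₂ * a₂)
    (h24 : b₂ * c₂ = c₂ * b₂ + ((1 : R) - ((q⁻¹ : Rˣ) : R) ^ 2) • (a₂ * (d₂ - a₂)))
    (h25 : d₂ * b₂ = b₂ * d₂ + ((1 : R) - ((q⁻¹ : Rˣ) : R) ^ 2) • (a₂ * b₂))
    (h26 : c₂ * d₂ = d₂ * c₂ + ((1 : R) - ((q⁻¹ : Rˣ) : R) ^ 2) • (c₂ * a₂))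
    (h27 : a₂ * d₂ - ((q : R) ^ 2) • (c₂ * b₂) = 1)
    -- exchange relations from the first-solution braiding: x₂·y₁ = Σ u₁·v₂
    (e11 : a₂ * a₁ = a₁ * a₂ + ((1 : R) - (q : R) ^ 2) • (b₁ * c₂))
    (e12 : a₂ * b₁ = b₁ * a₂)
    (e13 : a₂ * c₁ = c₁ * a₂ + ((1 : R) - (q : R) ^ 2) • ((d₁ - a₁) * c₂))
    (e14 : a₂ * d₁ = d₁ * a₂ + ((1 : R) - ((q⁻¹ : Rˣ) : R) ^ 2) • (b₁ * c₂))
    (e21 : b₂ * a₁ = a₁ * b₂ + ((1 : R) - (q : R) ^ 2) • (b₁ * (d₂ - a₂)))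
    (e22 : b₂ * b₁ = ((q : R) ^ 2) • (b₁ * b₂))
    (e23 : b₂ * c₁ = (((q⁻¹ : Rˣ) : R) ^ 2) • (c₁ * b₂)
      + ((((1 : R) + (q : R) ^ 2) * ((1 : R) - ((q⁻¹ : Rˣ) : R) ^ 2) ^ 2)) • (b₁ * c₂)
      - ((1 : R) - ((q⁻¹ : Rˣ) : R) ^ 2) • ((d₁ - a₁) * (d₂ - a₂)))
    (e24 : b₂ * d₁ = d₁ * b₂ + ((1 : R) - ((q⁻¹ : Rˣ) : R) ^ 2) • (b₁ * (d₂ - a₂)))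
    (e31 : c₂ * a₁ = a₁ * c₂)
    (e32 : c₂ * b₁ = (((q⁻¹ : Rˣ) : R) ^ 2) • (b₁ * c₂))
    (e33 : c₂ * c₁ = ((q : R) ^ 2) • (c₁ * c₂))
    (e34 : c₂ * d₁ = d₁ * c₂)
    (e41 : d₂ * a₁ = a₁ * d₂ + ((1 : R) - ((q⁻¹ : Rˣ) : R) ^ 2) • (b₁ * c₂))
    (e42 : d₂ * b₁ = b₁ * d₂)
    (e43 : d₂ * c₁ = c₁ * d₂ + ((1 : R) - ((q⁻¹ : Rˣ) : R) ^ 2) • ((d₁ - a₁) * c₂))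
    (e44 : d₂ * d₁ = d₁ * d₂
      - (((q⁻¹ : Rˣ) : R) ^ 2 * ((1 : R) - ((q⁻¹ : Rˣ) : R) ^ 2)) • (b₁ * c₂)) :
    let Q : R := (q : R)
    let Qi : R := ((q⁻¹ : Rˣ) : R)
    let A' : A := a₁ * a₂ + b₁ * c₂
    let B' : A := a₁ * b₂ + b₁ * d₂
    let C' : A := c₁ * a₂ + d₁ * c₂
    let D' : A := c₁ * b₂ + d₁ * d₂
    (B' * A' = (Q ^ 2) • (A' * B')) ∧
    (C' * A' = (Qi ^ 2) • (A' * C')) ∧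
    (A' * D' = D' * A') ∧
    (B' * C' = C' * B' + ((1 : R) - Qi ^ 2) • (A' * (D' - A'))) ∧
    (D' * B' = B' * D' + ((1 : R) - Qi ^ 2) • (A' * B')) ∧
    (C' * D' = D' * C' + ((1 : R) - Qi ^ 2) • (C' * A')) ∧
    (A' * D' - (Q ^ 2) • (C' * B') = 1) := by

  intro Q Qi A' B' C' D'
  have hmi : (q : R) * ((q⁻¹ : Rˣ) : R) = 1 := q.mul_inv
  have had1 : a₁ * d₁ = 1 + ((q : R) ^ 2) • (c₁ * b₁) := sub_eq_iff_eq_add.mp h17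
  have hda1 : d₁ * a₁ = 1 + ((q : R) ^ 2) • (c₁ * b₁) := by rw [← h13]; exact had1
  have had2 : a₂ * d₂ = 1 + ((q : R) ^ 2) • (c₂ * b₂) := sub_eq_iff_eq_add.mp h27
  have hda2 : d₂ * a₂ = 1 + ((q : R) ^ 2) • (c₂ * b₂) := by rw [← h23]; exact had2
  refine ⟨?_, ?_, ?_, ?_, ?_, ?_, ?_⟩ <;>
  · simp only [A', B', C', D', mul_add, add_mul, sub_mul, mul_sub, smul_add, smul_sub,
      smul_smul, mul_smul_comm, smul_mul_assoc, mul_assoc, one_mul, mul_one,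
      e11, mul_rot e11, e12, mul_rot e12, e13, mul_rot e13, e14, mul_rot e14,
      e21, mul_rot e21, e22, mul_rot e22, e23, mul_rot e23, e24, mul_rot e24,
      e31, mul_rot e31, e32, mul_rot e32, e33, mul_rot e33, e34, mul_rot e34,
      e41, mul_rot e41, e42, mul_rot e42, e43, mul_rot e43, e44, mul_rot e44,
      h11, mul_rot h11, h12, mul_rot h12, h14, mul_rot h14, h15, mul_rot h15,
      h16, mul_rot h16, had1, mul_rot had1, hda1, mul_rot hda1,
      h21, mul_rot h21, h22, mul_rot h22, h24, mul_rot h24, h25, mul_rot h25,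
      h26, mul_rot h26, had2, mul_rot had2, hda2, mul_rot hda2]
    match_scalars <;>
      first
        | linear_combination (0:R) * hmi
        | linear_combination ((-1:R) + (-1:R)*(q:R)^1*((q⁻¹:Rˣ):R)^1) * hmi
        | linear_combination ((-1:R)*(q:R)^2 + (-1:R)*(q:R)^3*((q⁻¹:Rˣ):R)^1) * hmi
        | linear_combination ((1:R) + (1:R)*(q:R)^1*((q⁻¹:Rˣ):R)^1) * hmi
        | linear_combination ((-1:R)*((q⁻¹:Rˣ):R)^2 + (1:R)*((q⁻¹:Rˣ):R)^4 + (-1:R)*(q:R)^1*((q⁻¹:Rˣ):R)^3 + (1:R)*(q:R)^1*((q⁻¹:Rˣ):R)^5) * hmi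
        | linear_combination ((-1:R) + (-1:R)*((q⁻¹:Rˣ):R)^2 + (-1:R)*(q:R)^1*((q⁻¹:Rˣ):R)^1 + (-1:R)*(q:R)^1*((q⁻¹:Rˣ):R)^3 + (1:R)*(q:R)^2*((q⁻¹:Rˣ):R)^4 + (1:R)*(q:R)^3*((q⁻¹:Rˣ):R)^5) * hmi
        | linear_combination ((1:R)*((q⁻¹:Rˣ):R)^4 + (1:R)*(q:R)^1*((q⁻¹:Rˣ):R)^5) * hmi
        | linear_combination ((-1:R)*((q⁻¹:Rˣ):R)^4 + (-1:R)*(q:R)^1*((q⁻¹:Rˣ):R)^5) * hmi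
        | linear_combination ((1:R) + (-1:R)*((q⁻¹:Rˣ):R)^2 + (1:R)*(q:R)^1*((q⁻¹:Rˣ):R)^1 + (-1:R)*(q:R)^1*((q⁻¹:Rˣ):R)^3) * hmi
        | linear_combination ((1:R) + (1:R)*(q:R)^1*((q⁻¹:Rˣ):R)^1 + (1:R)*(q:R)^2 + (-1:R)*(q:R)^2*((q⁻¹:Rˣ):R)^2 + (1:R)*(q:R)^3*((q⁻¹:Rˣ):R)^1 + (-1:R)*(q:R)^3*((q⁻¹:Rˣ):R)^3) * hmi
        | linear_combination ((-1:R) + (1:R)*((q⁻¹:Rˣ):R)^2 + (-1:R)*(q:R)^1*((q⁻¹:Rˣ):R)^1 + (1:R)*(q:R)^1*((q⁻¹:Rˣ):R)^3) * hmi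
        | linear_combination ((1:R)*((q⁻¹:Rˣ):R)^2 + (1:R)*(q:R)^1*((q⁻¹:Rˣ):R)^3) * hmi
        | linear_combination ((1:R)*((q⁻¹:Rˣ):R)^2 + (-1:R)*((q⁻¹:Rˣ):R)^4 + (1:R)*(q:R)^1*((q⁻¹:Rˣ):R)^3 + (-1:R)*(q:R)^1*((q⁻¹:Rˣ):R)^5) * hmi
        | linear_combination ((-1:R)*((q⁻¹:Rˣ):R)^2 + (2:R)*((q⁻¹:Rˣ):R)^4 + (-1:R)*((q⁻¹:Rˣ):R)^6 + (-1:R)*(q:R)*((q⁻¹:Rˣ):R)^3 + (2:R)*(q:R)*((q⁻¹:Rˣ):R)^5 + (-1:R)*(q:R)*((q⁻¹:Rˣ):R)^7) * hmi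
end

section
/- Let R be a commutative ring, q ∈ R invertible, and A an associative unital R-algebra containing a, b, c, d satisfying the braided SL_q(2) relations. Set p := q⁻²·a + d. Then: (i) p commutes with each of a, b, c, d; (ii) b·a = q²·a·b and a·c = q²·c·a; (iii) b·c = c·b − (1 − q⁻⁴)·a·a + (1 − q⁻²)·p·a; and (iv) a·p − q⁻²·a·a − q²·c·b = 1. -/
/-- For `a, b, c, d` satisfying the braided `SL_q(2)` relations,
the element `p = q⁻² a + d` is central among the generators, and the algebra
can be re-expressed in terms of `a, b, c, p`:
`b·a = q² a·b`, `a·c = q² c·a`, `b·c = c·b − (1−q⁻⁴) a·a + (1−q⁻²) p·a`, and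
`a·p − q⁻² a·a − q² c·b = 1`. -/
theorem braided_in_terms_of_p {R : Type*} [CommRing R] {A : Type*} [Ring A] [Algebra R A]
    (q : Rˣ) (a b c d : A)
    (h1 : b * a = ((q : R) ^ 2) • (a * b))
    (h2 : c * a = (((q⁻¹ : Rˣ) : R) ^ 2) • (a * c))
    (h3 : a * d = d * a)
    (h4 : b * c = c * b + ((1 : R) - ((q⁻¹ : Rˣ) : R) ^ 2) • (a * (d - a)))
    (h5 : d * b = b * d + ((1 : R) - ((q⁻¹ : Rˣ) : R) ^ 2) • (a * b))
    (h6 : c * d = d * c + ((1 : R) - ((q⁻¹ : Rˣ) : R) ^ 2) • (c * a))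
    (h7 : a * d - ((q : R) ^ 2) • (c * b) = 1) :
    let Q : R := (q : R)
    let Qi : R := ((q⁻¹ : Rˣ) : R)
    let p : A := Qi ^ 2 • a + d
    -- (i) p commutes with each generator
    (p * a = a * p) ∧ (p * b = b * p) ∧ (p * c = c * p) ∧ (p * d = d * p) ∧
    -- (ii)
    (b * a = Q ^ 2 • (a * b)) ∧ (a * c = Q ^ 2 • (c * a)) ∧
    -- (iii)
    (b * c = c * b - ((1 : R) - Qi ^ 4) • (a * a) + ((1 : R) - Qi ^ 2) • (p * a)) ∧
    -- (iv)
    (a * p - Qi ^ 2 • (a * a) - Q ^ 2 • (c * b) = 1) := by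
  intro Q Qi p
  have hQi : (Qi * Q : R) = 1 := by
    simpa [Q, Qi] using congrArg (Units.val) (inv_mul_self q)
  have h2' : a * c = Q ^ 2 • (c * a) := by
    rw [h2, smul_smul]
    have : (Q ^ 2 * Qi ^ 2 : R) = 1 := by
      rw [← mul_pow]; rw [mul_comm] at hQi; rw [hQi]; ring
    rw [this, one_smul]
  refine ⟨?_, ?_, ?_, ?_, h1, h2', ?_, ?_⟩
  · simp only [p, add_mul, mul_add, smul_mul_assoc, mul_smul_comm, h3]
  · simp only [p, add_mul, mul_add, smul_mul_assoc, mul_smul_comm, h1, h5, smul_smul,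
      smul_add]
    have : (Qi ^ 2 * Q ^ 2 : R) = 1 := by rw [← mul_pow, hQi]; ring
    rw [this, one_smul]
    module
  · simp only [p, add_mul, mul_add, smul_mul_assoc, mul_smul_comm, h2, h6, smul_smul,
      smul_add]
    module
  · simp only [p, add_mul, mul_add, smul_mul_assoc, mul_smul_comm, h3]
  · rw [h4]
    simp only [p, add_mul, smul_mul_assoc, mul_sub, smul_sub, smul_add, smul_smul, h3]
    module
  · simp only [p, mul_add, mul_smul_comm]
    rw [← h7]
    abel
end
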